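/- arXiv:1511.05934 — 3 statements merged into one kernel-verified Lean document; each statement's English description precedes it below -/
import Mathlib

section
/- For a BV function u on R^n with 0 ≤ u ≤ 1, at a jump point x ∈ J_u with jump values u^-(x) < u^+(x), for every s with u^-(x) < s < u^+(x), the point x belongs to the essential boundary of the level set {u > s}; conversely, if x ∈ ∂*{u > s} ∩ J_u then u^-(x) ≤ s ≤ u^+(x). -/
open MeasureTheory Metric Set Filter ENNReal
open scoped Topology NNReal ENNReal RealInnerProductSpace

noncomputable section

abbrev En (n : ℕ) := EuclideanSpace ℝ (Fin n)

variable {n : ℕ}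

/-- Divergence of a vector field. -/
def divg (φ : En n → En n) (x : En n) : ℝ :=
  ∑ i, fderiv ℝ φ x (EuclideanSpace.single i 1) i

/-- Total variation of a locally integrable function on a set, defined by duality with
smooth compactly supported vector fields. -/
def varMeas (u : En n → ℝ) (A : Set (En n)) : ℝ≥0∞ :=
  ⨆ φ : {φ : En n → En n // ContDiff ℝ (⊤ : ℕ∞) φ ∧ HasCompactSupport φ ∧ tsupport φ ⊆ A ∧
      ∀ x, ‖φ x‖ ≤ 1},
    ENNReal.ofReal (∫ x, u x * divg φ.1 x)

/-- Approximate (measure-theoretic) upper limit. -/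
def upperLim (u : En n → ℝ) (x : En n) : ℝ :=
  sInf {t : ℝ | Tendsto (fun r : ℝ =>
      (∫ y in ball x r, max (u y - t) 0) / (volume (ball x r)).toReal)
    (𝓝[>] 0) (𝓝 0)}

/-- Approximate (measure-theoretic) lower limit. -/
def lowerLim (u : En n → ℝ) (x : En n) : ℝ :=
  sSup {t : ℝ | Tendsto (fun r : ℝ =>
      (∫ y in ball x r, max (t - u y) 0) / (volume (ball x r)).toReal)
    (𝓝[>] 0) (𝓝 0)}

/-- The singular (approximate discontinuity) set `S_u`. -/
def singSet (u : En n → ℝ) : Set (En n) := {x | lowerLim u x < upperLim u x}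

-- The approximate jump set `J_u`: blow-ups converge in `L¹_loc` to a two-valued
-- function jumping across a hyperplane with normal `ν`.
open Classical in
def jumpSet (u : En n → ℝ) : Set (En n) :=
  {x | ∃ ν : En n, ‖ν‖ = 1 ∧ lowerLim u x < upperLim u x ∧
    ∀ R > (0:ℝ), Tendsto (fun r : ℝ =>
      ∫ y in ball (0 : En n) R,
        |u (x + r • y) - (if 0 < ⟪ν, y⟫ then upperLim u x else lowerLim u x)|)
      (𝓝[>] 0) (𝓝 0)}

/-- The reduced boundary `∂*E`, i.e. the jump set of the indicator function. -/
def redBdry (A : Set (En n)) : Set (En n) := jumpSet (A.indicator fun _ => (1:ℝ))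

/-- The essential boundary `∂ᵉE`: points of Lebesgue density neither `0` nor `1`. -/
def essBdry (A : Set (En n)) : Set (En n) :=
  {x | ¬ Tendsto (fun r : ℝ => volume (A ∩ ball x r) / volume (ball x r)) (𝓝[>] 0) (𝓝 0) ∧
       ¬ Tendsto (fun r : ℝ => volume (A ∩ ball x r) / volume (ball x r)) (𝓝[>] 0) (𝓝 1)}

namespace Stmt2Aux

lemma vol_preimage (x : En n) {r : ℝ} (hr : r ≠ 0) (A : Set (En n)) :
    volume ((fun y : En n => x + r • y) ⁻¹' A)
      = ENNReal.ofReal |(r ^ n)⁻¹| * volume A := by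
  have h : (fun y : En n => x + r • y) ⁻¹' A
      = (r • ·) ⁻¹' ((fun z : En n => x + z) ⁻¹' A) := rfl
  rw [h, Measure.addHaar_preimage_smul volume hr, measure_preimage_add,
    finrank_euclideanSpace_fin]

lemma contT (x : En n) (r : ℝ) : Continuous (fun y : En n => x + r • y) :=
  continuous_const.add (continuous_id.const_smul r)

lemma qmp (x : En n) {r : ℝ} (hr : r ≠ 0) :
    Measure.QuasiMeasurePreserving (fun y : En n => x + r • y) volume volume := by
  refine ⟨(contT x r).measurable, ?_⟩
  refine Measure.AbsolutelyContinuous.mk fun S hS h0 => ?_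
  rw [Measure.map_apply (contT x r).measurable hS, vol_preimage x hr, h0, mul_zero]

lemma preimage_ball (x : En n) {r : ℝ} (hr : 0 < r) :
    (fun y : En n => x + r • y) ⁻¹' ball x r = ball (0 : En n) 1 := by
  ext y
  simp only [mem_preimage, mem_ball, dist_eq_norm, add_sub_cancel_left, sub_zero, norm_smul,
    Real.norm_eq_abs, abs_of_pos hr]
  exact mul_lt_iff_lt_one_right hr


lemma cheb {u : En n → ℝ} (hm : AEStronglyMeasurable u volume) (hb : ∀ y, |u y| ≤ 1)
    (x : En n) {v : En n → ℝ} (hvm : Measurable v) {C : ℝ} (hvb : ∀ y, |v y| ≤ C)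
    (h : Tendsto (fun r : ℝ => ∫ y in ball (0:En n) 1, |u (x + r • y) - v y|) (𝓝[>] 0) (𝓝 0))
    {ε : ℝ} (hε : 0 < ε) :
    Tendsto (fun r : ℝ => volume {y : En n | y ∈ ball (0:En n) 1 ∧ ε ≤ |u (x + r • y) - v y|})
      (𝓝[>] 0) (𝓝 0) := by
  have hε0 : ENNReal.ofReal ε ≠ 0 := (ENNReal.ofReal_pos.2 hε).ne'
  have key : ∀ᶠ r in 𝓝[>] (0:ℝ),
      volume {y : En n | y ∈ ball (0:En n) 1 ∧ ε ≤ |u (x + r • y) - v y|}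
        ≤ ENNReal.ofReal (∫ y in ball (0:En n) 1, |u (x + r • y) - v y|) / ENNReal.ofReal ε := by
    filter_upwards [eventually_mem_nhdsWithin] with r hr
    have hrne : r ≠ 0 := ne_of_gt hr
    set f : En n → ℝ := fun y => |u (x + r • y) - v y| with hf
    have hfm : AEStronglyMeasurable f (volume.restrict (ball (0:En n) 1)) :=
      ((((hm.comp_quasiMeasurePreserving (qmp x hrne)).sub hvm.aestronglyMeasurable).norm).restrict).congr
        (Filter.Eventually.of_forall fun y => (Real.norm_eq_abs _))
    have hfi : Integrable f (volume.restrict (ball (0:En n) 1)) := by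
      refine Integrable.mono' (g := fun _ => 1 + C)
        (integrableOn_const measure_ball_lt_top.ne) hfm
        (Filter.Eventually.of_forall fun y => ?_)
      simp only [hf, Real.norm_eq_abs, abs_abs]
      exact (abs_sub _ _).trans (add_le_add (hb _) (hvb _))
    have hcheb := mul_meas_ge_le_lintegral₀ (μ := volume.restrict (ball (0:En n) 1))
      (f := fun y => ENNReal.ofReal (f y)) (hfm.aemeasurable.ennreal_ofReal) (ENNReal.ofReal ε)
    have hsets : {y : En n | ENNReal.ofReal ε ≤ ENNReal.ofReal (f y)} = {y | ε ≤ f y} := by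
      ext y; simp [ENNReal.ofReal_le_ofReal_iff (abs_nonneg _)]; exact ENNReal.ofReal_le_ofReal_iff (abs_nonneg _)
    rw [hsets] at hcheb
    have hlint : ∫⁻ y, ENNReal.ofReal (f y) ∂(volume.restrict (ball (0:En n) 1))
        = ENNReal.ofReal (∫ y in ball (0:En n) 1, f y) :=
      (ofReal_integral_eq_lintegral_ofReal hfi
        (Filter.Eventually.of_forall fun y => abs_nonneg _)).symm
    rw [hlint] at hcheb
    have hset : {y : En n | y ∈ ball (0:En n) 1 ∧ ε ≤ f y}
        = {y | ε ≤ f y} ∩ ball (0:En n) 1 := by ext y; simp [and_comm]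
    calc volume {y : En n | y ∈ ball (0:En n) 1 ∧ ε ≤ f y}
        = (volume.restrict (ball (0:En n) 1)) {y | ε ≤ f y} := by
          rw [Measure.restrict_apply' measurableSet_ball, ← hset]
      _ ≤ ENNReal.ofReal (∫ y in ball (0:En n) 1, f y) / ENNReal.ofReal ε := by
          rw [ENNReal.le_div_iff_mul_le (Or.inl hε0) (Or.inl ENNReal.ofReal_ne_top), mul_comm]
          exact hcheb
  have h2 : Tendsto (fun r : ℝ =>
      ENNReal.ofReal (∫ y in ball (0:En n) 1, |u (x + r • y) - v y|) / ENNReal.ofReal ε)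
      (𝓝[>] 0) (𝓝 0) := by
    have h3 := ENNReal.Tendsto.mul_const (ENNReal.tendsto_ofReal h)
      (Or.inr (ENNReal.inv_ne_top.2 hε0)) (b := (ENNReal.ofReal ε)⁻¹)
    simpa [div_eq_mul_inv] using h3
  exact tendsto_of_tendsto_of_tendsto_of_le_of_le' tendsto_const_nhds h2
    (Filter.Eventually.of_forall fun r => zero_le) key

lemma half_pos (ν : En n) (hν : ‖ν‖ = 1) :
    0 < volume ({y : En n | 0 < ⟪ν, y⟫} ∩ ball (0:En n) 1) := by
  have hop : IsOpen ({y : En n | 0 < ⟪ν, y⟫} ∩ ball (0:En n) 1) :=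
    (isOpen_lt continuous_const (continuous_const.inner continuous_id)).inter isOpen_ball
  refine hop.measure_pos volume ⟨(1/2 : ℝ) • ν, ?_, ?_⟩
  · have : ⟪ν, (1/2 : ℝ) • ν⟫ = (1/2 : ℝ) * (‖ν‖ ^ 2) := by
      rw [real_inner_smul_right, real_inner_self_eq_norm_sq]
    simp only [mem_setOf_eq, this, hν]; norm_num
  · simp only [mem_ball, dist_eq_norm, sub_zero, norm_smul, Real.norm_eq_abs, hν,
      mul_one]
    rw [abs_of_pos (by norm_num : (0:ℝ) < 1/2)]; norm_num

lemma half_neg (ν : En n) (hν : ‖ν‖ = 1) :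
    0 < volume ({y : En n | ⟪ν, y⟫ < 0} ∩ ball (0:En n) 1) := by
  have h := half_pos (-ν) (by simpa using hν)
  have : {y : En n | 0 < ⟪-ν, y⟫} = {y : En n | ⟪ν, y⟫ < 0} := by
    ext y; simp [inner_neg_left, neg_pos]
  rwa [this] at h

lemma integral_indicator_one₀ {C : Set (En n)} (hC : NullMeasurableSet C volume)
    {b : Set (En n)} (hb : MeasurableSet b) :
    ∫ y in b, C.indicator (fun _ => (1:ℝ)) y = (volume (C ∩ b)).toReal := by
  obtain ⟨C', hC'sub, hC'm, hC'eq⟩ := hC.exists_measurable_subset_ae_eq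
  have h1 : ∫ y in b, C.indicator (fun _ => (1:ℝ)) y
      = ∫ y in b, C'.indicator (fun _ => (1:ℝ)) y :=
    integral_congr_ae ((indicator_ae_eq_of_ae_eq_set hC'eq.symm).restrict)
  have h2 : (fun y => C'.indicator (fun _ => (1:ℝ)) y) = C'.indicator (1 : En n → ℝ) := rfl
  rw [h1, h2, integral_indicator_one hC'm, measureReal_def, Measure.restrict_apply hC'm]
  exact congrArg ENNReal.toReal (measure_congr (hC'eq.inter (Filter.EventuallyEq.refl _ _)))

lemma core2 (χ : En n → ℝ) (hm : AEStronglyMeasurable χ volume) (hb : ∀ y, |χ y| ≤ 1)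
    (x ν : En n) (hν : ‖ν‖ = 1) (A B c : ℝ) (hc : A ≠ c ∨ B ≠ c)
    (h1 : Tendsto (fun r : ℝ => ∫ y in ball (0:En n) 1,
        |χ (x + r • y) - (if 0 < ⟪ν, y⟫ then B else A)|) (𝓝[>] 0) (𝓝 0))
    (h2 : Tendsto (fun r : ℝ => ∫ y in ball (0:En n) 1, |χ (x + r • y) - c|) (𝓝[>] 0) (𝓝 0)) :
    False := by
  set w : En n → ℝ := fun y => if 0 < ⟪ν, y⟫ then B else A with hw
  have hwm : Measurable w :=
    Measurable.ite (measurableSet_lt measurable_const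
      ((continuous_const.inner continuous_id).measurable)) measurable_const measurable_const
  have hwb : ∀ y, |w y| ≤ |A| + |B| := by
    intro y
    by_cases h : 0 < ⟪ν, y⟫ <;> simp only [hw, h, if_true, if_false] <;>
      [linarith [abs_nonneg A]; linarith [abs_nonneg B]]
  have hIw : IntegrableOn (fun y => |w y - c|) (ball (0:En n) 1) volume := by
    refine Integrable.mono' (g := fun _ => (|A| + |B|) + |c|)
      (integrableOn_const measure_ball_lt_top.ne)
      (((hwm.sub measurable_const).norm.aestronglyMeasurable).restrict.congr
        (Filter.Eventually.of_forall fun y => Real.norm_eq_abs _))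
      (Filter.Eventually.of_forall fun y => ?_)
    simp only [Real.norm_eq_abs, abs_abs]
    exact (abs_sub _ _).trans (add_le_add (hwb _) le_rfl)
  set c0 := ∫ y in ball (0:En n) 1, |w y - c| with hc0
  have hkey : ∀ᶠ r in 𝓝[>] (0:ℝ), c0 ≤ (∫ y in ball (0:En n) 1, |χ (x + r • y) - w y|)
      + (∫ y in ball (0:En n) 1, |χ (x + r • y) - c|) := by
    filter_upwards [eventually_mem_nhdsWithin] with r hr
    have hχr : AEStronglyMeasurable (fun y : En n => χ (x + r • y)) volume :=
      hm.comp_quasiMeasurePreserving (qmp x (ne_of_gt hr))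
    have hI1 : IntegrableOn (fun y : En n => |χ (x + r • y) - w y|) (ball (0:En n) 1) volume := by
      refine Integrable.mono' (g := fun _ => 1 + (|A| + |B|))
        (integrableOn_const measure_ball_lt_top.ne)
        (((hχr.sub hwm.aestronglyMeasurable).norm.restrict).congr
          (Filter.Eventually.of_forall fun y => Real.norm_eq_abs _))
        (Filter.Eventually.of_forall fun y => ?_)
      simp only [Real.norm_eq_abs, abs_abs]
      exact (abs_sub _ _).trans (add_le_add (hb _) (hwb _))
    have hI2 : IntegrableOn (fun y : En n => |χ (x + r • y) - c|) (ball (0:En n) 1) volume := by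
      refine Integrable.mono' (g := fun _ => 1 + |c|)
        (integrableOn_const measure_ball_lt_top.ne)
        (((hχr.sub aestronglyMeasurable_const).norm.restrict).congr
          (Filter.Eventually.of_forall fun y => Real.norm_eq_abs _))
        (Filter.Eventually.of_forall fun y => ?_)
      simp only [Real.norm_eq_abs, abs_abs]
      exact (abs_sub _ _).trans (add_le_add (hb _) le_rfl)
    calc c0 ≤ ∫ y in ball (0:En n) 1, (|χ (x + r • y) - w y| + |χ (x + r • y) - c|) := by
          refine integral_mono hIw (hI1.add hI2) fun y => ?_
          calc |w y - c| ≤ |w y - χ (x + r • y)| + |χ (x + r • y) - c| := abs_sub_le _ _ _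
            _ = |χ (x + r • y) - w y| + |χ (x + r • y) - c| := by rw [abs_sub_comm]
      _ = _ := integral_add hI1 hI2
  have h1' : Tendsto (fun r : ℝ => ∫ y in ball (0:En n) 1, |χ (x + r • y) - w y|)
      (𝓝[>] 0) (𝓝 0) := by
    simpa only [hw] using h1
  have hc0le : c0 ≤ 0 := by
    refine ge_of_tendsto ?_ hkey
    simpa using h1'.add h2
  -- lower bound
  have hfin : ∀ S : Set (En n), volume (S ∩ ball (0:En n) 1) ≠ ⊤ := fun S =>
    ((measure_mono inter_subset_right).trans_lt measure_ball_lt_top).ne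
  have hlow : ∀ (S : Set (En n)), MeasurableSet S → S ⊆ ball (0:En n) 1 →
      (∀ y ∈ S, |w y - c| = |w y - c|) → True := fun _ _ _ _ => trivial
  rcases hc with hA | hB
  · have hpos := half_neg ν hν
    have hmeasS : MeasurableSet ({y : En n | ⟪ν, y⟫ < 0} ∩ ball (0:En n) 1) :=
      (measurableSet_lt ((continuous_const.inner continuous_id).measurable)
        measurable_const).inter measurableSet_ball
    have heq1 : EqOn (fun y => |w y - c|) (fun _ => |A - c|)
        ({y : En n | ⟪ν, y⟫ < 0} ∩ ball (0:En n) 1) := by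
      intro y hy
      have h0 : ⟪ν, y⟫ < 0 := hy.1
      show |w y - c| = |A - c|
      simp only [hw]
      rw [if_neg (lt_asymm h0)]
    have h5 : ∫ y in ({y : En n | ⟪ν, y⟫ < 0} ∩ ball (0:En n) 1), |w y - c|
        = (volume ({y : En n | ⟪ν, y⟫ < 0} ∩ ball (0:En n) 1)).toReal * |A - c| := by
      rw [setIntegral_congr_fun hmeasS heq1, setIntegral_const, smul_eq_mul, measureReal_def]
    have h6 : (volume ({y : En n | ⟪ν, y⟫ < 0} ∩ ball (0:En n) 1)).toReal * |A - c| ≤ c0 := by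
      rw [← h5]
      exact setIntegral_mono_set hIw (Filter.Eventually.of_forall fun y => abs_nonneg _)
        (HasSubset.Subset.eventuallyLE inter_subset_right)
    have h7 : 0 < (volume ({y : En n | ⟪ν, y⟫ < 0} ∩ ball (0:En n) 1)).toReal * |A - c| :=
      mul_pos (ENNReal.toReal_pos hpos.ne' (hfin _)) (abs_pos.2 (sub_ne_zero.2 hA))
    linarith
  · have hpos := half_pos ν hν
    have hmeasS : MeasurableSet ({y : En n | 0 < ⟪ν, y⟫} ∩ ball (0:En n) 1) :=
      (measurableSet_lt measurable_const
        ((continuous_const.inner continuous_id).measurable)).inter measurableSet_ball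
    have heq1 : EqOn (fun y => |w y - c|) (fun _ => |B - c|)
        ({y : En n | 0 < ⟪ν, y⟫} ∩ ball (0:En n) 1) := by
      intro y hy
      have h0 : 0 < ⟪ν, y⟫ := hy.1
      show |w y - c| = |B - c|
      simp only [hw]
      rw [if_pos h0]
    have h5 : ∫ y in ({y : En n | 0 < ⟪ν, y⟫} ∩ ball (0:En n) 1), |w y - c|
        = (volume ({y : En n | 0 < ⟪ν, y⟫} ∩ ball (0:En n) 1)).toReal * |B - c| := by
      rw [setIntegral_congr_fun hmeasS heq1, setIntegral_const, smul_eq_mul, measureReal_def]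
    have h6 : (volume ({y : En n | 0 < ⟪ν, y⟫} ∩ ball (0:En n) 1)).toReal * |B - c| ≤ c0 := by
      rw [← h5]
      exact setIntegral_mono_set hIw (Filter.Eventually.of_forall fun y => abs_nonneg _)
        (HasSubset.Subset.eventuallyLE inter_subset_right)
    have h7 : 0 < (volume ({y : En n | 0 < ⟪ν, y⟫} ∩ ball (0:En n) 1)).toReal * |B - c| :=
      mul_pos (ENNReal.toReal_pos hpos.ne' (hfin _)) (abs_pos.2 (sub_ne_zero.2 hB))
    linarith

end Stmt2Aux

/-- At a jump point `x ∈ J_u` of a `BV` function `0 ≤ u ≤ 1`: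
for every `u⁻(x) < s < u⁺(x)` the point `x` lies in the essential boundary of `{u > s}`;
conversely, if `x ∈ ∂*{u > s} ∩ J_u` then `u⁻(x) ≤ s ≤ u⁺(x)`. -/
theorem stmt_2 (n : ℕ) (u : En n → ℝ)
    (hu : Integrable u) (hrange : ∀ x, u x ∈ Icc (0:ℝ) 1)
    (hBV : varMeas u Set.univ < ⊤)
    (x : En n) (hx : x ∈ jumpSet u) :
    (∀ s : ℝ, lowerLim u x < s → s < upperLim u x → x ∈ essBdry {y | s < u y}) ∧
    (∀ s : ℝ, x ∈ redBdry {y | s < u y} ∩ jumpSet u →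
      lowerLim u x ≤ s ∧ s ≤ upperLim u x) := by
  obtain ⟨ν, hν, hab, htend⟩ := hx
  have hum : AEStronglyMeasurable u volume := hu.1
  have hub : ∀ y, |u y| ≤ 1 := fun y => abs_le.2 ⟨by linarith [(hrange y).1], (hrange y).2⟩
  have hvm : Measurable (fun y : En n => if 0 < ⟪ν, y⟫ then upperLim u x else lowerLim u x) :=
    Measurable.ite (measurableSet_lt measurable_const
      ((continuous_const.inner continuous_id).measurable)) measurable_const measurable_const
  have hvb : ∀ y : En n, |if 0 < ⟪ν, y⟫ then upperLim u x else lowerLim u x|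
      ≤ |lowerLim u x| + |upperLim u x| := by
    intro y
    by_cases h : 0 < ⟪ν, y⟫ <;> simp only [h, if_true, if_false] <;>
      [linarith [abs_nonneg (lowerLim u x)]; linarith [abs_nonneg (upperLim u x)]]
  have CH : ∀ {ε : ℝ}, 0 < ε →
      Tendsto (fun r : ℝ => volume {y : En n | y ∈ ball (0:En n) 1 ∧
        ε ≤ |u (x + r • y) - (if 0 < ⟪ν, y⟫ then upperLim u x else lowerLim u x)|})
        (𝓝[>] 0) (𝓝 0) := fun hε =>
    Stmt2Aux.cheb hum hub x hvm hvb (htend 1 one_pos) hε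
  have hnm : ∀ s : ℝ, NullMeasurableSet {y : En n | s < u y} volume := fun s =>
    nullMeasurableSet_lt aemeasurable_const hum.aemeasurable
  have hBpos : volume (ball (0:En n) 1) ≠ 0 := (measure_ball_pos volume _ one_pos).ne'
  have hBtop : volume (ball (0:En n) 1) ≠ ⊤ := measure_ball_lt_top.ne
  constructor
  · intro s hs1 hs2
    set E : ℝ → Set (En n) :=
      fun r => ((fun y : En n => x + r • y) ⁻¹' {y : En n | s < u y}) ∩ ball (0:En n) 1 with hE
    have hDeq : ∀ᶠ r in 𝓝[>] (0:ℝ),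
        volume ({y : En n | s < u y} ∩ ball x r) / volume (ball x r)
          = volume (E r) / volume (ball (0:En n) 1) := by
      filter_upwards [eventually_mem_nhdsWithin] with r hr
      have hrne : r ≠ 0 := ne_of_gt hr
      have hk0 : ENNReal.ofReal |(r ^ n)⁻¹| ≠ 0 :=
        (ENNReal.ofReal_pos.2 (abs_pos.2 (inv_ne_zero (pow_ne_zero _ hrne)))).ne'
      have h1 : volume (E r)
          = ENNReal.ofReal |(r ^ n)⁻¹| * volume ({y : En n | s < u y} ∩ ball x r) := by
        rw [hE]
        simp only []
        rw [← Stmt2Aux.preimage_ball x hr, ← preimage_inter]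
        exact Stmt2Aux.vol_preimage x hrne _
      have h2 : volume (ball (0:En n) 1) = ENNReal.ofReal |(r ^ n)⁻¹| * volume (ball x r) := by
        rw [← Stmt2Aux.preimage_ball x hr]
        exact Stmt2Aux.vol_preimage x hrne _
      rw [h1, h2, ENNReal.mul_div_mul_left _ _ hk0 ENNReal.ofReal_ne_top]
    have hHp : Tendsto (fun r : ℝ =>
        volume (({y : En n | 0 < ⟪ν, y⟫} ∩ ball (0:En n) 1) \ E r)) (𝓝[>] 0) (𝓝 0) := by
      refine tendsto_of_tendsto_of_tendsto_of_le_of_le' tendsto_const_nhds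
        (CH (show (0:ℝ) < upperLim u x - s by linarith))
        (Filter.Eventually.of_forall fun r => zero_le)
        (Filter.Eventually.of_forall fun r => measure_mono ?_)
      rintro y ⟨⟨hy1, hy2⟩, hy3⟩
      have h0 : 0 < ⟪ν, y⟫ := hy1
      have hyu : ¬ s < u (x + r • y) := fun h => hy3 ⟨h, hy2⟩
      refine mem_setOf.2 ⟨hy2, ?_⟩
      rw [if_pos h0]
      have h4 : upperLim u x - u (x + r • y) ≤ |u (x + r • y) - upperLim u x| := by
        rw [abs_sub_comm]; exact le_abs_self _
      have h5 : u (x + r • y) ≤ s := not_lt.1 hyu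
      linarith
    have hHm : Tendsto (fun r : ℝ =>
        volume (({y : En n | ⟪ν, y⟫ < 0} ∩ ball (0:En n) 1) ∩ E r)) (𝓝[>] 0) (𝓝 0) := by
      refine tendsto_of_tendsto_of_tendsto_of_le_of_le' tendsto_const_nhds
        (CH (show (0:ℝ) < s - lowerLim u x by linarith))
        (Filter.Eventually.of_forall fun r => zero_le)
        (Filter.Eventually.of_forall fun r => measure_mono ?_)
      rintro y ⟨⟨hy1, hy2⟩, hy3, -⟩
      have h0 : ⟪ν, y⟫ < 0 := hy1
      have h5 : s < u (x + r • y) := hy3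
      refine mem_setOf.2 ⟨hy2, ?_⟩
      rw [if_neg (lt_asymm h0)]
      have h4 : u (x + r • y) - lowerLim u x ≤ |u (x + r • y) - lowerLim u x| := le_abs_self _
      linarith
    refine ⟨fun h0 => ?_, fun h1t => ?_⟩
    · have h0' := Filter.Tendsto.congr' hDeq h0
      have hαpos : volume ({y : En n | 0 < ⟪ν, y⟫} ∩ ball (0:En n) 1) ≠ 0 :=
        (Stmt2Aux.half_pos ν hν).ne'
      have hev1 := hHp.eventually_lt_const (ENNReal.half_pos hαpos)
      have hcpos : 0 < (volume ({y : En n | 0 < ⟪ν, y⟫} ∩ ball (0:En n) 1) / 2)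
          / volume (ball (0:En n) 1) :=
        ENNReal.div_pos (ENNReal.half_pos hαpos).ne' hBtop
      have hev2 := h0'.eventually_lt_const hcpos
      obtain ⟨r, h1r, h2r⟩ := (hev1.and hev2).exists
      have hsub : {y : En n | 0 < ⟪ν, y⟫} ∩ ball (0:En n) 1
          ⊆ (({y : En n | 0 < ⟪ν, y⟫} ∩ ball (0:En n) 1) \ E r) ∪ E r := fun y hy =>
        (em (y ∈ E r)).elim Or.inr (fun h => Or.inl ⟨hy, h⟩)
      have hle : volume ({y : En n | 0 < ⟪ν, y⟫} ∩ ball (0:En n) 1)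
          ≤ volume (({y : En n | 0 < ⟪ν, y⟫} ∩ ball (0:En n) 1) \ E r) + volume (E r) :=
        le_trans (measure_mono hsub) (measure_union_le _ _)
      have h4 : volume ({y : En n | 0 < ⟪ν, y⟫} ∩ ball (0:En n) 1) / 2 ≤ volume (E r) := by
        by_contra hlt
        push_neg at hlt
        have h6 := ENNReal.add_lt_add h1r hlt
        rw [ENNReal.add_halves] at h6
        exact absurd (lt_of_le_of_lt hle h6) (lt_irrefl _)
      exact absurd (lt_of_le_of_lt (ENNReal.div_le_div_right h4 _) h2r) (lt_irrefl _)
    · have h1' := Filter.Tendsto.congr' hDeq h1t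
      have hβpos : volume ({y : En n | ⟪ν, y⟫ < 0} ∩ ball (0:En n) 1) ≠ 0 :=
        (Stmt2Aux.half_neg ν hν).ne'
      have hev1 := hHm.eventually_lt_const (ENNReal.half_pos hβpos)
      have hk : (volume (ball (0:En n) 1) - volume ({y : En n | ⟪ν, y⟫ < 0} ∩ ball (0:En n) 1) / 2)
          / volume (ball (0:En n) 1) < 1 := by
        rw [ENNReal.div_lt_iff (Or.inl hBpos) (Or.inl hBtop), one_mul]
        exact ENNReal.sub_lt_self hBtop hBpos (ENNReal.half_pos hβpos).ne'
      have hev2 := h1'.eventually_const_lt hk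
      obtain ⟨r, hrpos, h1r, h2r⟩ := (eventually_mem_nhdsWithin.and (hev1.and hev2)).exists
      have hsub : {y : En n | ⟪ν, y⟫ < 0} ∩ ball (0:En n) 1
          ⊆ (({y : En n | ⟪ν, y⟫ < 0} ∩ ball (0:En n) 1) ∩ E r)
            ∪ (({y : En n | ⟪ν, y⟫ < 0} ∩ ball (0:En n) 1) \ E r) := fun y hy =>
        (em (y ∈ E r)).elim (fun h => Or.inl ⟨hy, h⟩) (fun h => Or.inr ⟨hy, h⟩)
      have hle : volume ({y : En n | ⟪ν, y⟫ < 0} ∩ ball (0:En n) 1)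
          ≤ volume (({y : En n | ⟪ν, y⟫ < 0} ∩ ball (0:En n) 1) ∩ E r)
            + volume (({y : En n | ⟪ν, y⟫ < 0} ∩ ball (0:En n) 1) \ E r) :=
        le_trans (measure_mono hsub) (measure_union_le _ _)
      have h4 : volume ({y : En n | ⟪ν, y⟫ < 0} ∩ ball (0:En n) 1) / 2
          ≤ volume (({y : En n | ⟪ν, y⟫ < 0} ∩ ball (0:En n) 1) \ E r) := by
        by_contra hlt
        push_neg at hlt
        have h6 := ENNReal.add_lt_add h1r hlt
        rw [ENNReal.add_halves] at h6
        exact absurd (lt_of_le_of_lt hle h6) (lt_irrefl _)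
      have hnmE : NullMeasurableSet (E r) volume :=
        ((hnm s).preimage (Stmt2Aux.qmp x hrpos.ne')).inter measurableSet_ball.nullMeasurableSet
      have hEball : E r ⊆ ball (0:En n) 1 := by rw [hE]; exact inter_subset_right
      have hsum : volume (E r) + volume (ball (0:En n) 1 \ E r) = volume (ball (0:En n) 1) := by
        rw [← measure_union₀' hnmE disjoint_sdiff_self_right.aedisjoint, union_diff_cancel hEball]
      have h7 : volume (({y : En n | ⟪ν, y⟫ < 0} ∩ ball (0:En n) 1) \ E r)
          ≤ volume (ball (0:En n) 1 \ E r) :=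
        measure_mono (diff_subset_diff_left inter_subset_right)
      have h8 : volume (E r) + volume ({y : En n | ⟪ν, y⟫ < 0} ∩ ball (0:En n) 1) / 2
          ≤ volume (ball (0:En n) 1) := by
        calc volume (E r) + volume ({y : En n | ⟪ν, y⟫ < 0} ∩ ball (0:En n) 1) / 2
            ≤ volume (E r) + volume (ball (0:En n) 1 \ E r) :=
              add_le_add le_rfl (le_trans h4 h7)
          _ = _ := hsum
      have hβtop : volume ({y : En n | ⟪ν, y⟫ < 0} ∩ ball (0:En n) 1) / 2 ≠ ⊤ :=
        (lt_of_le_of_lt (le_trans ENNReal.half_le_self (measure_mono inter_subset_right))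
          measure_ball_lt_top).ne
      have h9 := ENNReal.le_sub_of_add_le_right hβtop h8
      have h10 := ENNReal.div_le_div_right h9 (volume (ball (0:En n) 1))
      exact absurd (lt_of_lt_of_le h2r h10) (lt_irrefl _)
  · intro s hmem
    obtain ⟨hred, -⟩ := hmem
    obtain ⟨ν2, hν2, hABlt, htend2⟩ := hred
    obtain ⟨M, hMsub, hMm, hMeq⟩ := (hnm s).exists_measurable_subset_ae_eq
    have hχm : AEStronglyMeasurable ({y : En n | s < u y}.indicator (fun _ => (1:ℝ))) volume :=
      ⟨M.indicator (fun _ => (1:ℝ)), stronglyMeasurable_const.indicator hMm,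
        indicator_ae_eq_of_ae_eq_set hMeq.symm⟩
    have hχb : ∀ y, |{y : En n | s < u y}.indicator (fun _ => (1:ℝ)) y| ≤ 1 := by
      intro y
      by_cases h : y ∈ {y : En n | s < u y} <;> simp [Set.indicator_apply, h]
    have hABne : ∀ c : ℝ,
        lowerLim ({y : En n | s < u y}.indicator (fun _ => (1:ℝ))) x ≠ c ∨
        upperLim ({y : En n | s < u y}.indicator (fun _ => (1:ℝ))) x ≠ c := fun c => by
      by_contra h
      push_neg at h
      rw [h.1, h.2] at hABlt
      exact lt_irrefl _ hABlt
    constructor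
    · by_contra hlt
      push_neg at hlt
      refine Stmt2Aux.core2 _ hχm hχb x ν2 hν2 _ _ 1 (hABne 1) (htend2 1 one_pos) ?_
      have hmeas : Tendsto (fun r : ℝ =>
          volume (((fun y : En n => x + r • y) ⁻¹' {y : En n | ¬ s < u y}) ∩ ball (0:En n) 1))
          (𝓝[>] 0) (𝓝 0) := by
        refine tendsto_of_tendsto_of_tendsto_of_le_of_le' tendsto_const_nhds
          (CH (show (0:ℝ) < lowerLim u x - s by linarith))
          (Filter.Eventually.of_forall fun r => zero_le)
          (Filter.Eventually.of_forall fun r => measure_mono ?_)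
        rintro y ⟨hy1, hy2⟩
        have h6 : u (x + r • y) ≤ s := not_lt.1 hy1
        refine mem_setOf.2 ⟨hy2, ?_⟩
        by_cases h : 0 < ⟪ν, y⟫
        · rw [if_pos h]
          have h4 : upperLim u x - u (x + r • y) ≤ |u (x + r • y) - upperLim u x| := by
            rw [abs_sub_comm]; exact le_abs_self _
          linarith
        · rw [if_neg h]
          have h4 : lowerLim u x - u (x + r • y) ≤ |u (x + r • y) - lowerLim u x| := by
            rw [abs_sub_comm]; exact le_abs_self _
          linarith
      have htoR : Tendsto (fun r : ℝ =>
          (volume (((fun y : En n => x + r • y) ⁻¹' {y : En n | ¬ s < u y})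
            ∩ ball (0:En n) 1)).toReal) (𝓝[>] 0) (𝓝 0) := by
        have := (ENNReal.tendsto_toReal (a := 0) (by simp)).comp hmeas
        simpa only [Function.comp_def, ENNReal.toReal_zero] using this
      refine Filter.Tendsto.congr' ?_ htoR
      filter_upwards [eventually_mem_nhdsWithin] with r hr
      have hCnm : NullMeasurableSet
          ((fun y : En n => x + r • y) ⁻¹' {y : En n | ¬ s < u y}) volume :=
        ((hnm s).compl).preimage (Stmt2Aux.qmp x (ne_of_gt hr))
      rw [← Stmt2Aux.integral_indicator_one₀ hCnm measurableSet_ball]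
      refine integral_congr_ae (Filter.Eventually.of_forall fun y => ?_)
      by_cases h : s < u (x + r • y) <;>
        simp [Set.indicator_apply, h]
    · by_contra hlt
      push_neg at hlt
      refine Stmt2Aux.core2 _ hχm hχb x ν2 hν2 _ _ 0 (hABne 0) (htend2 1 one_pos) ?_
      have hmeas : Tendsto (fun r : ℝ =>
          volume (((fun y : En n => x + r • y) ⁻¹' {y : En n | s < u y}) ∩ ball (0:En n) 1))
          (𝓝[>] 0) (𝓝 0) := by
        refine tendsto_of_tendsto_of_tendsto_of_le_of_le' tendsto_const_nhds
          (CH (show (0:ℝ) < s - upperLim u x by linarith))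
          (Filter.Eventually.of_forall fun r => zero_le)
          (Filter.Eventually.of_forall fun r => measure_mono ?_)
        rintro y ⟨hy1, hy2⟩
        have h6 : s < u (x + r • y) := hy1
        refine mem_setOf.2 ⟨hy2, ?_⟩
        by_cases h : 0 < ⟪ν, y⟫
        · rw [if_pos h]
          have h4 : u (x + r • y) - upperLim u x ≤ |u (x + r • y) - upperLim u x| :=
            le_abs_self _
          linarith
        · rw [if_neg h]
          have h4 : u (x + r • y) - lowerLim u x ≤ |u (x + r • y) - lowerLim u x| :=
            le_abs_self _
          linarith
      have htoR : Tendsto (fun r : ℝ =>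
          (volume (((fun y : En n => x + r • y) ⁻¹' {y : En n | s < u y})
            ∩ ball (0:En n) 1)).toReal) (𝓝[>] 0) (𝓝 0) := by
        have := (ENNReal.tendsto_toReal (a := 0) (by simp)).comp hmeas
        simpa only [Function.comp_def, ENNReal.toReal_zero] using this
      refine Filter.Tendsto.congr' ?_ htoR
      filter_upwards [eventually_mem_nhdsWithin] with r hr
      have hCnm : NullMeasurableSet
          ((fun y : En n => x + r • y) ⁻¹' {y : En n | s < u y}) volume :=
        (hnm s).preimage (Stmt2Aux.qmp x (ne_of_gt hr))
      rw [← Stmt2Aux.integral_indicator_one₀ hCnm measurableSet_ball]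
      refine integral_congr_ae (Filter.Eventually.of_forall fun y => ?_)
      by_cases h : s < u (x + r • y) <;>
        simp [Set.indicator_apply, h]
end
end

section
/- Let f: [0,1] → [0,∞) be absolutely continuous, nondecreasing, with f(0)=0, and suppose there is a constant C > 0 such that f(t) ≤ C (t f'(t))^{1 + 1/(2n)} for almost every t ∈ (0,1), for some integer n ≥ 1. If f(1) ≤ M, then there exists δ > 0 depending only on n, C, M such that f(t) = 0 for all t ≤ δ. -/
/-!
Where `f > 0`, the differential inequality gives `t f'(t) ≥ (f(t)/C)^γ` with `γ = α⁻¹ < 1`,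
`α = 1 + 1/(2n)`, and since `f` is nondecreasing, integrating from `a` to `b` yields
`f b ≥ f a + (f a / C)^γ log (b / a)`. So raising `f` from a level `y` to `2y` costs a
logarithmic length of at most `C^γ y^(1-γ)`. If `f δ = ε > 0`, climbing from `ε` past `M` by
doublings costs a geometric sum, bounded by a constant times `M^(1-γ)`, which exceeds the
available length `log (1/δ)` once `δ` is small.
-/

open MeasureTheory Set Filter intervalIntegral Real

/-- For `x < 0`, `x ^ α = exp (α log |x|) cos (α π)` in Mathlib, so a bound `y ≤ C x ^ α` with
`y > 0` still forces `x > 0` when `α ∈ [1/2, 3/2]`. -/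
lemma Real.rpow_nonpos_of_nonpos {x α : ℝ} (hx : x ≤ 0) (hα₁ : 1 / 2 ≤ α) (hα₂ : α ≤ 3 / 2) :
    x ^ α ≤ 0 := by
  rcases hx.lt_or_eq with hx | rfl
  · rw [rpow_def_of_neg hx]
    exact mul_nonpos_of_nonneg_of_nonpos (exp_pos _).le
      (cos_nonpos_of_pi_div_two_le_of_le (by nlinarith [pi_pos]) (by nlinarith [pi_pos]))
  · rw [zero_rpow (by linarith)]

lemma div_rpow_inv_le_of_le_mul_rpow {C α x y : ℝ} (hC : 0 < C) (hα₁ : 1 / 2 ≤ α)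
    (hα₂ : α ≤ 3 / 2) (hy : 0 < y) (h : y ≤ C * x ^ α) : (y / C) ^ α⁻¹ ≤ x := by
  have hx : 0 < x := by
    by_contra! hx
    nlinarith [rpow_nonpos_of_nonpos hx hα₁ hα₂]
  rw [rpow_inv_le_iff_of_pos (by positivity) hx.le (by linarith), div_le_iff₀ hC]
  linarith

lemma mul_log_div_le_integral {g : ℝ → ℝ} {a b K : ℝ} (ha : 0 < a) (hab : a ≤ b)
    (hg : IntervalIntegrable g volume a b) (h : ∀ᵐ t, t ∈ Ioo a b → K / t ≤ g t) :
    K * log (b / a) ≤ ∫ t in a..b, g t := by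
  have h0 : (0 : ℝ) ∉ uIcc a b := by
    rw [uIcc_of_le hab]; exact fun h0 => ha.not_ge h0.1
  have hinv : IntervalIntegrable (fun t => K / t) volume a b :=
    (continuousOn_const.div continuousOn_id fun t ht => by
      rintro rfl; exact h0 ht).intervalIntegrable
  calc K * log (b / a) = ∫ t in a..b, K / t := by
        simp only [div_eq_mul_inv K, intervalIntegral.integral_const_mul, integral_inv h0]
    _ ≤ ∫ t in a..b, g t := by
        refine integral_mono_ae_restrict hab hinv hg ?_
        rw [EventuallyLE, ← Measure.restrict_congr_set Ioo_ae_eq_Icc,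
          ae_restrict_iff' measurableSet_Ioo]
        exact h

def GrowsLogarithmically (C γ : ℝ) (f : ℝ → ℝ) : Prop :=
  ∀ ⦃a b : ℝ⦄, 0 < a → a ≤ b → b ≤ 1 → 0 < f a → f a + (f a / C) ^ γ * log (b / a) ≤ f b

lemma growsLogarithmically_of_le_mul_rpow {f f' : ℝ → ℝ} {C α : ℝ} (hC : 0 < C)
    (hα₁ : 1 / 2 ≤ α) (hα₂ : α ≤ 3 / 2) (hmono : MonotoneOn f (Icc 0 1))
    (hint : IntegrableOn f' (Icc 0 1)) (hFTC : ∀ x ∈ Icc (0 : ℝ) 1, f x = ∫ t in (0 : ℝ)..x, f' t)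
    (hode : ∀ᵐ t, t ∈ Ioo (0 : ℝ) 1 → f t ≤ C * (t * f' t) ^ α) :
    GrowsLogarithmically C α⁻¹ f := by
  intro a b ha hab hb hfa
  have hii : ∀ x ∈ Icc (0 : ℝ) 1, IntervalIntegrable f' volume 0 x := fun x hx =>
    (hint.mono_set (by rw [uIcc_of_le hx.1]; exact Icc_subset_Icc_right hx.2)).intervalIntegrable
  have haI : a ∈ Icc (0 : ℝ) 1 := ⟨ha.le, hab.trans hb⟩
  have hbI : b ∈ Icc (0 : ℝ) 1 := ⟨ha.le.trans hab, hb⟩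
  have hdiff : f b - f a = ∫ t in a..b, f' t := by
    rw [hFTC b hbI, hFTC a haI, integral_interval_sub_left (hii b hbI) (hii a haI)]
  have hlower : ∀ᵐ t, t ∈ Ioo a b → (f a / C) ^ α⁻¹ / t ≤ f' t := by
    filter_upwards [hode] with t ht htab
    have ht0 : 0 < t := ha.trans htab.1
    have hfat : f a ≤ f t := hmono haI ⟨ht0.le, htab.2.le.trans hb⟩ htab.1.le
    rw [div_le_iff₀ ht0, mul_comm]
    exact div_rpow_inv_le_of_le_mul_rpow hC hα₁ hα₂ hfa
      (hfat.trans (ht ⟨ht0, htab.2.trans_le hb⟩))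
  have := mul_log_div_le_integral ha hab
    ((hii a haI).symm.trans (hii b hbI)) hlower
  linarith

lemma sum_two_pow_mul_rpow_le {y β : ℝ} (hy : 0 ≤ y) (hβ : 0 < β) (k : ℕ) :
    ∑ j ∈ Finset.range k, (2 ^ j * y) ^ β ≤ (2 ^ k * y) ^ β / (2 ^ β - 1) := by
  have hr : 1 < (2 : ℝ) ^ β := one_lt_rpow one_lt_two hβ
  have hpow : ∀ j : ℕ, (2 ^ j * y) ^ β = y ^ β * ((2 : ℝ) ^ β) ^ j := fun j => by
    rw [mul_rpow (by positivity) hy, ← rpow_pow_comm zero_le_two, mul_comm]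
  simp only [hpow, ← Finset.mul_sum, geom_sum_eq hr.ne']
  rw [mul_div_assoc']
  gcongr
  linarith

namespace GrowsLogarithmically

variable {f : ℝ → ℝ} {C γ : ℝ}

lemma two_mul_le (hf : GrowsLogarithmically C γ f) (hC : 0 < C) (hγ : 0 ≤ γ) {a y : ℝ}
    (ha : 0 < a) (hy : 0 < y) (hya : y ≤ f a) (h1 : a * exp (C ^ γ * y ^ (1 - γ)) ≤ 1) :
    2 * y ≤ f (a * exp (C ^ γ * y ^ (1 - γ))) := by
  have hle : a ≤ a * exp (C ^ γ * y ^ (1 - γ)) :=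
    le_mul_of_one_le_right ha.le (one_le_exp (by positivity))
  have hgrow := hf ha hle h1 (hy.trans_le hya)
  rw [mul_div_cancel_left₀ _ ha.ne', log_exp] at hgrow
  have hroot : (y / C) ^ γ * (C ^ γ * y ^ (1 - γ)) = y := by
    rw [div_rpow hy.le hC.le, div_mul_eq_mul_div, mul_div_assoc, mul_div_cancel_left₀ _
      (rpow_pos_of_pos hC γ).ne', ← rpow_add hy, add_sub_cancel, rpow_one]
  have : y ≤ (f a / C) ^ γ * (C ^ γ * y ^ (1 - γ)) :=
    hroot.symm.trans_le <| mul_le_mul_of_nonneg_right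
      (rpow_le_rpow (div_pos hy hC).le (div_le_div_of_nonneg_right hya hC.le) hγ) (by positivity)
  linarith

lemma two_pow_mul_le (hf : GrowsLogarithmically C γ f) (hC : 0 < C) (hγ : 0 ≤ γ) (k : ℕ)
    {a y : ℝ} (ha : 0 < a) (hy : 0 < y) (hya : y ≤ f a)
    (h1 : a * exp (C ^ γ * ∑ j ∈ Finset.range k, (2 ^ j * y) ^ (1 - γ)) ≤ 1) :
    2 ^ k * y ≤ f (a * exp (C ^ γ * ∑ j ∈ Finset.range k, (2 ^ j * y) ^ (1 - γ))) := by
  induction k generalizing a y with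
  | zero => simpa using hya
  | succ k ih =>
    set a' := a * exp (C ^ γ * y ^ (1 - γ))
    have hsplit : a * exp (C ^ γ * ∑ j ∈ Finset.range (k + 1), (2 ^ j * y) ^ (1 - γ)) =
        a' * exp (C ^ γ * ∑ j ∈ Finset.range k, (2 ^ j * (2 * y)) ^ (1 - γ)) := by
      simp only [a', Finset.sum_range_succ', pow_succ, mul_assoc, pow_zero, one_mul, mul_add,
        exp_add]
      ring
    rw [hsplit] at h1 ⊢
    have ha' : a' ≤ 1 := (le_mul_of_one_le_right (by positivity)
      (one_le_exp (by positivity))).trans h1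
    rw [pow_succ, mul_assoc]
    exact ih (by positivity) (by positivity) (hf.two_mul_le hC hγ ha hy hya ha') h1

end GrowsLogarithmically

lemma exists_pos_forall_eq_zero_of_growsLogarithmically {C γ : ℝ} (M : ℝ) (hC : 0 < C)
    (hγ₀ : 0 ≤ γ) (hγ₁ : γ < 1) :
    ∃ δ > 0, ∀ f : ℝ → ℝ, MonotoneOn f (Icc 0 1) → (∀ t ∈ Icc (0 : ℝ) 1, 0 ≤ f t) →
      GrowsLogarithmically C γ f → f 1 ≤ M → ∀ t ∈ Icc 0 δ, f t = 0 := by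
  set β := 1 - γ
  have hβ : 0 < β := sub_pos.2 hγ₁
  have hr : 1 < (2 : ℝ) ^ β := one_lt_rpow one_lt_two hβ
  set T := C ^ γ * (2 * |M|) ^ β / (2 ^ β - 1)
  have hT : 0 ≤ T := div_nonneg (by positivity) (by linarith)
  refine ⟨exp (-T), exp_pos _, fun f hmono hnonneg hf hM => ?_⟩
  set δ := exp (-T)
  have hδI : δ ∈ Icc (0 : ℝ) 1 := ⟨(exp_pos _).le, exp_le_one_iff.2 (by linarith)⟩
  have h1I : (1 : ℝ) ∈ Icc (0 : ℝ) 1 := right_mem_Icc.2 zero_le_one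
  have hfδ : f δ = 0 := by
    by_contra hne
    set ε := f δ
    have hε : 0 < ε := (hnonneg δ hδI).lt_of_ne' hne
    obtain ⟨n, hn, hn'⟩ := exists_nat_pow_near
      ((one_le_div hε).2 ((hmono hδI h1I hδI.2).trans hM)) one_lt_two
    set s := δ * exp (C ^ γ * ∑ j ∈ Finset.range (n + 1), (2 ^ j * ε) ^ β)
    have hsum : C ^ γ * ∑ j ∈ Finset.range (n + 1), (2 ^ j * ε) ^ β ≤ T := calc
      _ ≤ C ^ γ * ((2 ^ (n + 1) * ε) ^ β / (2 ^ β - 1)) :=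
          mul_le_mul_of_nonneg_left (sum_two_pow_mul_rpow_le hε.le hβ _) (by positivity)
      _ ≤ C ^ γ * (2 * |M|) ^ β / (2 ^ β - 1) := by
          have : 2 ^ (n + 1) * ε ≤ 2 * |M| := by
            rw [pow_succ', mul_assoc]
            exact mul_le_mul_of_nonneg_left (((le_div_iff₀ hε).1 hn).trans (le_abs_self M))
              zero_le_two
          rw [mul_div_assoc']
          gcongr
    have hs : s ≤ 1 := calc
      s ≤ δ * exp T := mul_le_mul_of_nonneg_left (exp_le_exp.2 hsum) (exp_pos _).le
      _ = 1 := by rw [← exp_add, neg_add_cancel, exp_zero]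
    have hgrow := hf.two_pow_mul_le hC hγ₀ (n + 1) (exp_pos _) hε le_rfl hs
    have hs1 : f s ≤ f 1 := hmono ⟨by positivity, hs⟩ h1I hs
    have : M < 2 ^ (n + 1) * ε := by rwa [div_lt_iff₀ hε] at hn'
    linarith
  intro t ht
  have htI : t ∈ Icc (0 : ℝ) 1 := ⟨ht.1, ht.2.trans hδI.2⟩
  linarith [hmono htI hδI ht.2, hnonneg t htI]

/-- ODE lemma: if `f : [0,1] → [0,∞)` is absolutely continuous (expressed
via the fundamental theorem of calculus with an integrable derivative `f'`), nondecreasing,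
`f 0 = 0`, satisfies `f t ≤ C (t f'(t))^{1 + 1/(2n)}` a.e. on `(0,1)`, and `f 1 ≤ M`, then
`f` vanishes on `[0, δ]` for some `δ > 0` depending only on `n`, `C`, `M`. -/
theorem stmt_3 (n : ℕ) (hn : 1 ≤ n) (C M : ℝ) (hC : 0 < C) :
    ∃ δ : ℝ, 0 < δ ∧
    ∀ f f' : ℝ → ℝ,
      (∀ t ∈ Icc (0:ℝ) 1, 0 ≤ f t) →
      MonotoneOn f (Icc (0:ℝ) 1) →
      f 0 = 0 →
      IntegrableOn f' (Icc (0:ℝ) 1) →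
      (∀ x ∈ Icc (0:ℝ) 1, f x = ∫ t in (0:ℝ)..x, f' t) →
      (∀ᵐ t, t ∈ Ioo (0:ℝ) 1 → f t ≤ C * (t * f' t) ^ ((1:ℝ) + 1 / (2 * (n:ℝ)))) →
      f 1 ≤ M →
      ∀ t ∈ Icc (0:ℝ) δ, f t = 0 := by
  have hn' : (1 : ℝ) ≤ n := by exact_mod_cast hn
  have hα₁ : 1 < (1 : ℝ) + 1 / (2 * n) := lt_add_of_pos_right _ (by positivity)
  have hα₂ : (1 : ℝ) + 1 / (2 * n) ≤ 3 / 2 := by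
    have : 1 / (2 * n : ℝ) ≤ 1 / 2 := by gcongr; linarith
    linarith
  obtain ⟨δ, hδ, hvanish⟩ := exists_pos_forall_eq_zero_of_growsLogarithmically M hC
    (inv_nonneg.2 (by linarith)) (inv_lt_one_of_one_lt₀ hα₁)
  exact ⟨δ, hδ, fun f f' hnonneg hmono _ hint hFTC hode hM => hvanish f hmono hnonneg
    (growsLogarithmically_of_le_mul_rpow hC (by linarith) hα₂ hmono hint hFTC hode) hM⟩
end

section
/- Let A_k be a sequence of closed subsets of an open set U ⊆ R^n such that the measures H^{n-1} restricted to A_k converge weakly-* to a Radon measure μ on U, and suppose there exist constants 0 < c ≤ C such that c·r^{n-1} ≤ H^{n-1}(B_r(x) ∩ A_k) ≤ C·r^{n-1} for every ball B_r(x) ⊆ U with x ∈ A_k, uniformly in k. Then A_k converges to the support of μ locally in U in the Hausdorff distance, and the support of μ satisfies the same two-sided density estimates (with possibly adjusted constants). -/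
open MeasureTheory Metric Set Filter ENNReal
open scoped Topology NNReal ENNReal RealInnerProductSpace

noncomputable section

variable {n : ℕ}

/-- The localized Hausdorff distance `d(A,B;V)` between two sets, as in the paper. -/
def hdist {X : Type*} [PseudoMetricSpace X] (A B V : Set X) : ℝ :=
  (⨆ x ∈ B ∩ V, infDist x A) + (⨆ x ∈ A ∩ V, infDist x B)

/-- The support of a measure: points all of whose neighborhoods have positive measure. -/
def msupport {X : Type*} [PseudoMetricSpace X] [MeasurableSpace X] (μ : Measure X) : Set X :=
  {x | ∀ r : ℝ, 0 < r → 0 < μ (ball x r)}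

-- bump function
lemma bump_exists (x : En n) (s t : ℝ) (hs : 0 ≤ s) (hst : s < t) :
    ∃ f : En n → ℝ, Continuous f ∧ HasCompactSupport f ∧ tsupport f ⊆ closedBall x t ∧
      (∀ y, 0 ≤ f y) ∧ (∀ y, f y ≤ 1) ∧ (∀ y ∈ closedBall x s, f y = 1) ∧
      (∀ y, f y ≤ (closedBall x t).indicator (fun _ => (1:ℝ)) y) ∧
      (∀ y, (closedBall x s).indicator (fun _ => (1:ℝ)) y ≤ f y) := by
  classical
  set f : En n → ℝ := fun y => max 0 (min 1 ((t - dist y x) / (t - s))) with hf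
  have hcont : Continuous f := by
    apply Continuous.max continuous_const
    apply Continuous.min continuous_const
    exact ((continuous_const.sub (continuous_id.dist continuous_const)).div_const _)
  have hnonneg : ∀ y, 0 ≤ f y := fun y => le_max_left _ _
  have hle1 : ∀ y, f y ≤ 1 := fun y => max_le (by norm_num) (min_le_left _ _)
  have hone : ∀ y ∈ closedBall x s, f y = 1 := by
    intro y hy
    have h1 : (1:ℝ) ≤ (t - dist y x) / (t - s) := by
      rw [le_div_iff₀ (by linarith)]
      have := mem_closedBall.1 hy
      linarith
    simp only [hf]
    rw [min_eq_left h1, max_eq_right zero_le_one]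
  have hsupp : Function.support f ⊆ closedBall x t := by
    intro y hy
    simp only [hf, Function.mem_support] at hy
    by_contra hyt
    have h' : t < dist y x := by simpa [mem_closedBall, not_le] using hyt
    have : (t - dist y x) / (t - s) ≤ 0 := by
      apply div_nonpos_of_nonpos_of_nonneg <;> linarith
    have : min 1 ((t - dist y x) / (t - s)) ≤ 0 := le_trans (min_le_right _ _) this
    exact hy (max_eq_left this)
  have htsupp : tsupport f ⊆ closedBall x t :=
    closure_minimal hsupp isClosed_closedBall
  refine ⟨f, hcont, ?_, htsupp, hnonneg, hle1, hone, ?_, ?_⟩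
  · exact HasCompactSupport.intro (isCompact_closedBall x t) (fun y hy => by
      by_contra h; exact hy (hsupp h))
  · intro y
    by_cases hy : y ∈ closedBall x t
    · simp [indicator_of_mem hy, hle1 y]
    · have : f y = 0 := by
        by_contra h; exact hy (hsupp h)
      simp [indicator_of_notMem hy, this]
  · intro y
    by_cases hy : y ∈ closedBall x s
    · simp [indicator_of_mem hy, hone y hy]
    · simp [indicator_of_notMem hy, hnonneg y]

-- integral bounds for a bump
lemma integral_bump_bounds (m : Measure (En n)) (B : Set (En n)) (x : En n) (s t : ℝ)
    (hfin : m (B ∩ closedBall x t) ≠ ∞)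
    (f : En n → ℝ) (hcont : Continuous f)
    (hfub : ∀ y, f y ≤ (closedBall x t).indicator (fun _ => (1:ℝ)) y)
    (hflb : ∀ y, (closedBall x s).indicator (fun _ => (1:ℝ)) y ≤ f y)
    (hfnn : ∀ y, 0 ≤ f y) :
    Integrable f (m.restrict B) ∧
    (m (B ∩ closedBall x s)).toReal ≤ ∫ y in B, f y ∂m ∧
    (∫ y in B, f y ∂m) ≤ (m (B ∩ closedBall x t)).toReal := by
  have hms : MeasurableSet (closedBall x s) := measurableSet_closedBall
  have hmt : MeasurableSet (closedBall x t) := measurableSet_closedBall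
  have hrt : (m.restrict B) (closedBall x t) ≠ ∞ := by
    rw [Measure.restrict_apply hmt]; rwa [Set.inter_comm B] at hfin
  have hrs' : (m.restrict B) (closedBall x s) ≠ ∞ := by
    rw [Measure.restrict_apply hms]
    refine ne_top_of_le_ne_top hfin (measure_mono ?_)
    intro y hy
    rcases hy with ⟨hy1, hy2⟩
    refine ⟨hy2, ?_⟩
    by_contra h
    have h3 := hflb y
    have h2 := hfub y
    rw [indicator_of_mem hy1] at h3
    rw [indicator_of_notMem h] at h2
    linarith
  have hindt : Integrable ((closedBall x t).indicator (fun _ => (1:ℝ))) (m.restrict B) := by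
    rw [integrable_indicator_iff hmt]
    exact integrableOn_const hrt
  have hinds : Integrable ((closedBall x s).indicator (fun _ => (1:ℝ))) (m.restrict B) := by
    rw [integrable_indicator_iff hms]
    exact integrableOn_const hrs'
  have hint : Integrable f (m.restrict B) := by
    refine hindt.mono' (hcont.aestronglyMeasurable) ?_
    filter_upwards with y
    rw [Real.norm_eq_abs, abs_of_nonneg (hfnn y)]
    exact hfub y
  refine ⟨hint, ?_, ?_⟩
  · calc (m (B ∩ closedBall x s)).toReal
        = ∫ y in B, (closedBall x s).indicator (fun _ => (1:ℝ)) y ∂m := by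
          rw [integral_indicator_const (1:ℝ) hms, measureReal_restrict_apply hms, measureReal_def, smul_eq_mul,
            mul_one, Set.inter_comm]
      _ ≤ ∫ y in B, f y ∂m := integral_mono hinds hint hflb
  · calc (∫ y in B, f y ∂m) ≤ ∫ y in B, (closedBall x t).indicator (fun _ => (1:ℝ)) y ∂m :=
          integral_mono hint hindt hfub
      _ = (m (B ∩ closedBall x t)).toReal := by
          rw [integral_indicator_const (1:ℝ) hmt, measureReal_restrict_apply hmt, measureReal_def, smul_eq_mul,
            mul_one, Set.inter_comm]

-- complement of support is null
lemma measure_compl_msupport (μ : Measure (En n)) [IsLocallyFiniteMeasure μ] :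
    μ (msupport μ)ᶜ = 0 := by
  apply measure_null_of_locally_null
  intro x hx
  simp only [msupport, mem_compl_iff, mem_setOf_eq, not_forall] at hx
  obtain ⟨r, hr, hball⟩ := hx
  exact ⟨ball x r, mem_nhdsWithin_of_mem_nhds (ball_mem_nhds x hr),
    le_antisymm (le_of_not_gt hball) zero_le⟩

lemma isClosed_msupport (μ : Measure (En n)) : IsClosed (msupport μ) := by
  rw [← isOpen_compl_iff]
  rw [isOpen_iff_forall_mem_open]
  intro x hx
  simp only [msupport, mem_compl_iff, mem_setOf_eq, not_forall] at hx
  obtain ⟨r, hr, hball⟩ := hx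
  refine ⟨ball x r, ?_, isOpen_ball, mem_ball_self hr⟩
  intro y hy
  simp only [msupport, mem_compl_iff, mem_setOf_eq, not_forall]
  refine ⟨r - dist y x, by simpa [sub_pos] using hy, ?_⟩
  refine not_lt.2 (le_trans (measure_mono ?_) (le_of_not_gt hball))
  intro z hz
  calc dist z x ≤ dist z y + dist y x := dist_triangle _ _ _
    _ < (r - dist y x) + dist y x := by exact add_lt_add_of_lt_of_le (mem_ball.1 hz) le_rfl
    _ = r := by ring

lemma hausdorff_finite_on_compact {d : ℝ} {B U K : Set (En n)} (hU : IsOpen U)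
    (hd : ∀ x ∈ B, ∀ r : ℝ, 0 < r → closedBall x r ⊆ U → μH[d] (B ∩ ball x r) ≠ ∞)
    (hB : IsClosed B) (hK : IsCompact K) (hKU : K ⊆ U) : μH[d] (B ∩ K) ≠ ∞ := by
  have hcpt : IsCompact (B ∩ K) := hK.inter_left hB
  have hsub : ∀ y ∈ B ∩ K, ∃ ρ, 0 < ρ ∧ closedBall y ρ ⊆ U := by
    intro y hy
    obtain ⟨ε, hε, hball⟩ := Metric.isOpen_iff.1 hU y (hKU hy.2)
    exact ⟨ε/2, by linarith, fun z hz => hball (mem_ball.2 (lt_of_le_of_lt (mem_closedBall.1 hz) (by linarith)))⟩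
  choose! ρ hρpos hρsub using hsub
  obtain ⟨b', hb'sub, hb'fin, hb'cov⟩ := hcpt.elim_finite_subcover_image
    (fun y (hy : y ∈ B ∩ K) => isOpen_ball (x := y) (ε := ρ y))
    (fun y hy => mem_biUnion hy (mem_ball_self (hρpos y hy)))
  have hle : μH[d] (B ∩ K) ≤ μH[d] (⋃ y ∈ b', B ∩ ball y (ρ y)) := by
    apply measure_mono
    intro z hz
    obtain ⟨y, hy, hzy⟩ := mem_iUnion₂.1 (hb'cov hz)
    exact mem_iUnion₂.2 ⟨y, hy, hz.1, hzy⟩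
  refine ne_top_of_le_ne_top ?_ hle
  refine (measure_biUnion_lt_top hb'fin ?_).ne
  intro y hy
  have hyBK := hb'sub hy
  exact lt_top_iff_ne_top.2 (hd y hyBK.1 (ρ y) (hρpos y hyBK) (hρsub y hyBK))

lemma inter_ball_eq_iUnion (S : Set (En n)) (x : En n) {r : ℝ} (hr : 0 < r) :
    S ∩ ball x r = ⋃ k : ℕ, S ∩ closedBall x (r - r / (k+1)) := by
  ext y
  simp only [mem_inter_iff, mem_iUnion, mem_ball, mem_closedBall]
  constructor
  · rintro ⟨hyS, hyr⟩
    obtain ⟨k, hk⟩ := exists_nat_gt (r / (r - dist y x))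
    refine ⟨k, hyS, ?_⟩
    have hpos : 0 < r - dist y x := by linarith
    have hk1 : (0:ℝ) < (k:ℝ) + 1 := by positivity
    have : r / (r - dist y x) < (k:ℝ) + 1 := lt_of_lt_of_le hk (by linarith)
    have : r < ((k:ℝ)+1) * (r - dist y x) := by
      rwa [div_lt_iff₀ hpos] at this
    have : r / ((k:ℝ)+1) < r - dist y x := by
      rw [div_lt_iff₀ hk1]; linarith [this]
    linarith
  · rintro ⟨k, hyS, hyk⟩
    have hk1 : (0:ℝ) < (k:ℝ) + 1 := by positivity
    have : 0 < r / ((k:ℝ)+1) := by positivity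
    exact ⟨hyS, by linarith⟩

lemma measure_inter_ball_eq_iSup (m : Measure (En n)) (S : Set (En n)) (hS : MeasurableSet S)
    (x : En n) {r : ℝ} (hr : 0 < r) :
    m (S ∩ ball x r) = ⨆ k : ℕ, m (S ∩ closedBall x (r - r / (k+1))) := by
  rw [inter_ball_eq_iUnion S x hr]
  apply Directed.measure_iUnion
  apply Monotone.directed_le
  intro k l hkl
  apply inter_subset_inter_right
  apply closedBall_subset_closedBall
  have : r / ((l:ℝ)+1) ≤ r / ((k:ℝ)+1) := by
    apply div_le_div_of_nonneg_left hr.le (by positivity)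
    exact_mod_cast by omega
  linarith

section Core

variable {c C : ℝ} {U : Set (En n)} {A : ℕ → Set (En n)} {μ : Measure (En n)}

/-- L1: near any support point, the `A k` eventually have points. -/
lemma L1 [IsLocallyFiniteMeasure μ]
    (hconv : ∀ f : En n → ℝ, Continuous f → HasCompactSupport f → tsupport f ⊆ U →
      Tendsto (fun k => ∫ x in A k, f x ∂μH[(n:ℝ)-1]) atTop (𝓝 (∫ x, f x ∂μ)))
    {x : En n} (hx : x ∈ msupport μ) {ε : ℝ} (hε : 0 < ε) (hεU : closedBall x ε ⊆ U) :
    ∀ᶠ k in atTop, (A k ∩ ball x ε).Nonempty := by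
  have hpos : 0 < μ (ball x ε) := hx ε hε
  have hiSup := measure_inter_ball_eq_iSup μ univ MeasurableSet.univ x hε
  simp only [univ_inter] at hiSup
  rw [hiSup] at hpos
  obtain ⟨j, hj⟩ := lt_iSup_iff.1 hpos
  set s : ℝ := max (ε - ε / (j+1)) (ε/2) with hs
  have hspos : 0 < s := lt_max_of_lt_right (by linarith)
  have hslt : s < ε := by
    apply max_lt _ (by linarith)
    have : 0 < ε / ((j:ℝ)+1) := by positivity
    linarith
  have hμs : 0 < μ (closedBall x s) :=
    lt_of_lt_of_le hj (measure_mono (closedBall_subset_closedBall (le_max_left _ _)))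
  set t : ℝ := (s + ε)/2 with ht
  have hst : s < t := by rw [ht]; linarith
  have htε : t < ε := by rw [ht]; linarith
  obtain ⟨f, hfc, hfcs, hfts, hfnn, hfle1, hfone, hfub, hflb⟩ :=
    bump_exists x s t hspos.le hst
  have htU : closedBall x t ⊆ U :=
    (closedBall_subset_closedBall htε.le).trans hεU
  have hfint := integral_bump_bounds μ univ x s t
    (by simp only [univ_inter]; exact (isCompact_closedBall x t).measure_lt_top.ne)
    f hfc hfub hflb hfnn
  have hInt : 0 < ∫ y, f y ∂μ := by
    have h1 := hfint.2.1
    rw [setIntegral_univ] at h1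
    refine lt_of_lt_of_le ?_ h1
    simp only [univ_inter]
    exact ENNReal.toReal_pos hμs.ne' (((isCompact_closedBall x s).measure_lt_top).ne)
  have hconvf := hconv f hfc hfcs (hfts.trans htU)
  filter_upwards [hconvf.eventually (eventually_gt_nhds hInt)] with k hk
  by_contra hemp
  rw [not_nonempty_iff_eq_empty] at hemp
  have : ∫ y in A k, f y ∂μH[(n:ℝ)-1] = 0 := by
    apply setIntegral_eq_zero_of_forall_eq_zero
    intro y hy
    by_contra hfy
    have hyt : y ∈ closedBall x t := hfts (subset_closure (Function.mem_support.2 hfy))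
    have : y ∈ A k ∩ ball x ε := ⟨hy, lt_of_le_of_lt (mem_closedBall.1 hyt) htε⟩
    rw [hemp] at this
    exact this
  rw [this] at hk
  exact lt_irrefl _ hk

/-- L2: lower density bound for `μ` at support points. -/
lemma L2 [IsLocallyFiniteMeasure μ] (hc : 0 < c) (hU : IsOpen U)
    (hAcl : ∀ k, IsClosed (A k))
    (hconv : ∀ f : En n → ℝ, Continuous f → HasCompactSupport f → tsupport f ⊆ U →
      Tendsto (fun k => ∫ x in A k, f x ∂μH[(n:ℝ)-1]) atTop (𝓝 (∫ x, f x ∂μ)))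
    (hdens : ∀ k, ∀ x ∈ A k, ∀ r : ℝ, 0 < r → closedBall x r ⊆ U →
      ENNReal.ofReal (c * r ^ (n-1)) ≤ μH[(n:ℝ)-1] (A k ∩ ball x r) ∧
      μH[(n:ℝ)-1] (A k ∩ ball x r) ≤ ENNReal.ofReal (C * r ^ (n-1)))
    {x : En n} (hx : x ∈ msupport μ) {r : ℝ} (hr : 0 < r) (hrU : closedBall x r ⊆ U) :
    ENNReal.ofReal (c * (r/8) ^ (n-1)) ≤ μ (ball x r) := by
  have h8 : (0:ℝ) < r/8 := by linarith
  have hεU : closedBall x (r/8) ⊆ U :=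
    (closedBall_subset_closedBall (by linarith)).trans hrU
  have h2U : closedBall x (r/2) ⊆ U :=
    (closedBall_subset_closedBall (by linarith)).trans hrU
  obtain ⟨f, hfc, hfcs, hfts, hfnn, hfle1, hfone, hfub, hflb⟩ :=
    bump_exists x (r/4) (r/2) (by linarith) (by linarith)
  have hbound : ∀ᶠ k in atTop, c * (r/8) ^ (n-1) ≤ ∫ y in A k, f y ∂μH[(n:ℝ)-1] := by
    filter_upwards [L1 hconv hx h8 hεU] with k hk
    obtain ⟨y, hyA, hyb⟩ := hk
    have hfin : μH[(n:ℝ)-1] (A k ∩ closedBall x (r/2)) ≠ ∞ := by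
      refine hausdorff_finite_on_compact hU ?_ (hAcl k) (isCompact_closedBall x (r/2)) h2U
      intro z hz ρ hρ hρU
      exact ne_top_of_le_ne_top ofReal_ne_top (hdens k z hz ρ hρ hρU).2
    have hbd := integral_bump_bounds (μH[(n:ℝ)-1]) (A k) x (r/4) (r/2) hfin f hfc hfub hflb hfnn
    refine le_trans ?_ hbd.2.1
    have hsub : A k ∩ ball y (r/8) ⊆ A k ∩ closedBall x (r/4) := by
      rintro z ⟨hz1, hz2⟩
      refine ⟨hz1, mem_closedBall.2 ?_⟩
      have h1 := mem_ball.1 hz2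
      have h2 := mem_ball.1 hyb
      calc dist z x ≤ dist z y + dist y x := dist_triangle _ _ _
        _ ≤ r/4 := by linarith
    have hyU : closedBall y (r/8) ⊆ U := by
      refine subset_trans ?_ h2U
      intro z hz
      have h2 := mem_ball.1 hyb
      have := mem_closedBall.1 hz
      exact mem_closedBall.2 (by calc dist z x ≤ dist z y + dist y x := dist_triangle _ _ _
        _ ≤ r/2 := by linarith)
    have hlow := (hdens k y hyA (r/8) h8 hyU).1
    have hle : ENNReal.ofReal (c * (r/8) ^ (n-1)) ≤ μH[(n:ℝ)-1] (A k ∩ closedBall x (r/4)) :=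
      le_trans hlow (measure_mono hsub)
    have hfin' : μH[(n:ℝ)-1] (A k ∩ closedBall x (r/4)) ≠ ∞ :=
      ne_top_of_le_ne_top hfin (measure_mono (inter_subset_inter_right _
        (closedBall_subset_closedBall (by linarith))))
    calc c * (r/8) ^ (n-1) = (ENNReal.ofReal (c * (r/8) ^ (n-1))).toReal := by
          rw [ENNReal.toReal_ofReal (by positivity)]
      _ ≤ (μH[(n:ℝ)-1] (A k ∩ closedBall x (r/4))).toReal := ENNReal.toReal_mono hfin' hle
  have hμint := integral_bump_bounds μ univ x (r/4) (r/2)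
    (by simp only [univ_inter]; exact (isCompact_closedBall x (r/2)).measure_lt_top.ne)
    f hfc hfub hflb hfnn
  have hlim : c * (r/8) ^ (n-1) ≤ ∫ y, f y ∂μ :=
    ge_of_tendsto (hconv f hfc hfcs (hfts.trans h2U)) hbound
  have h2 := hμint.2.2
  rw [setIntegral_univ] at h2
  simp only [univ_inter] at h2
  have : c * (r/8) ^ (n-1) ≤ (μ (closedBall x (r/2))).toReal := le_trans hlim h2
  calc ENNReal.ofReal (c * (r/8) ^ (n-1)) ≤ μ (closedBall x (r/2)) :=
        ENNReal.ofReal_le_of_le_toReal this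
    _ ≤ μ (ball x r) := measure_mono (closedBall_subset_ball (by linarith))

/-- L7: upper bound for `μ` on balls around support points. -/
lemma L7 [IsLocallyFiniteMeasure μ] (hc : 0 < c) (hcC : c ≤ C) (hU : IsOpen U)
    (hconv : ∀ f : En n → ℝ, Continuous f → HasCompactSupport f → tsupport f ⊆ U →
      Tendsto (fun k => ∫ x in A k, f x ∂μH[(n:ℝ)-1]) atTop (𝓝 (∫ x, f x ∂μ)))
    (hdens : ∀ k, ∀ x ∈ A k, ∀ r : ℝ, 0 < r → closedBall x r ⊆ U →
      ENNReal.ofReal (c * r ^ (n-1)) ≤ μH[(n:ℝ)-1] (A k ∩ ball x r) ∧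
      μH[(n:ℝ)-1] (A k ∩ ball x r) ≤ ENNReal.ofReal (C * r ^ (n-1)))
    {x : En n} (hx : x ∈ msupport μ) {r : ℝ} (hr : 0 < r) (hrU : closedBall x r ⊆ U) :
    μ (ball x r) ≤ ENNReal.ofReal (C * r ^ (n-1)) := by
  have hC : 0 < C := lt_of_lt_of_le hc hcC
  have hiSup := measure_inter_ball_eq_iSup μ univ MeasurableSet.univ x hr
  simp only [univ_inter] at hiSup
  rw [hiSup]
  refine iSup_le ?_
  intro j
  set s : ℝ := max (r - r / (j+1)) (r/2) with hsdef
  have hspos : 0 < s := lt_max_of_lt_right (by linarith)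
  have hslt : s < r := by
    apply max_lt _ (by linarith)
    have : 0 < r / ((j:ℝ)+1) := by positivity
    linarith
  have hstep : μ (closedBall x (r - r / (↑j+1))) ≤ μ (closedBall x s) :=
    measure_mono (closedBall_subset_closedBall (le_max_left _ _))
  refine le_trans hstep ?_
  set s₁ : ℝ := (s + r)/2 with hs1def
  have hss1 : s < s₁ := by rw [hs1def]; linarith
  have hs1r : s₁ < r := by rw [hs1def]; linarith
  set ε : ℝ := (r - s₁)/2 with hεdef
  have hεpos : 0 < ε := by rw [hεdef]; linarith
  have hεU : closedBall x ε ⊆ U :=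
    (closedBall_subset_closedBall (by rw [hεdef]; linarith)).trans hrU
  obtain ⟨f, hfc, hfcs, hfts, hfnn, hfle1, hfone, hfub, hflb⟩ :=
    bump_exists x s s₁ hspos.le hss1
  have hs1U : closedBall x s₁ ⊆ U :=
    (closedBall_subset_closedBall hs1r.le).trans hrU
  have hbound : ∀ᶠ k in atTop, (∫ y in A k, f y ∂μH[(n:ℝ)-1]) ≤ C * r ^ (n-1) := by
    filter_upwards [L1 hconv hx hεpos hεU] with k hk
    obtain ⟨y, hyA, hyb⟩ := hk
    have hyU : closedBall y (s₁ + ε) ⊆ U := by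
      refine subset_trans ?_ hrU
      intro z hz
      have h2 := mem_ball.1 hyb
      have := mem_closedBall.1 hz
      refine mem_closedBall.2 ?_
      calc dist z x ≤ dist z y + dist y x := dist_triangle _ _ _
        _ ≤ s₁ + 2*ε := by linarith
        _ = r := by rw [hεdef]; ring
    have hs1ε : 0 < s₁ + ε := by linarith
    have hup := (hdens k y hyA (s₁ + ε) hs1ε hyU).2
    have hsub : A k ∩ closedBall x s₁ ⊆ A k ∩ ball y (s₁ + ε) := by
      rintro z ⟨hz1, hz2⟩
      refine ⟨hz1, mem_ball.2 ?_⟩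
      have h2 := mem_ball.1 hyb
      have := mem_closedBall.1 hz2
      calc dist z y ≤ dist z x + dist x y := dist_triangle _ _ _
        _ < s₁ + ε := by rw [dist_comm x y]; linarith
    have hfin : μH[(n:ℝ)-1] (A k ∩ closedBall x s₁) ≠ ∞ :=
      ne_top_of_le_ne_top ofReal_ne_top (le_trans (measure_mono hsub) hup)
    have hbd := integral_bump_bounds (μH[(n:ℝ)-1]) (A k) x s s₁ hfin f hfc hfub hflb hfnn
    refine le_trans hbd.2.2 ?_
    have hle2 : μH[(n:ℝ)-1] (A k ∩ closedBall x s₁) ≤ ENNReal.ofReal (C * r ^ (n-1)) := by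
      refine le_trans (le_trans (measure_mono hsub) hup) (ENNReal.ofReal_le_ofReal ?_)
      have h1 : s₁ + ε ≤ r := by rw [hεdef]; linarith
      exact mul_le_mul_of_nonneg_left (pow_le_pow_left₀ hs1ε.le h1 _) hC.le
    calc (μH[(n:ℝ)-1] (A k ∩ closedBall x s₁)).toReal
        ≤ (ENNReal.ofReal (C * r ^ (n-1))).toReal := ENNReal.toReal_mono ofReal_ne_top hle2
      _ = C * r ^ (n-1) := ENNReal.toReal_ofReal (by positivity)
  have hlim : (∫ y, f y ∂μ) ≤ C * r ^ (n-1) :=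
    le_of_tendsto (hconv f hfc hfcs (hfts.trans hs1U)) hbound
  have hμint := integral_bump_bounds μ univ x s s₁
    (by simp only [univ_inter]; exact (isCompact_closedBall x s₁).measure_lt_top.ne)
    f hfc hfub hflb hfnn
  have h1 := hμint.2.1
  rw [setIntegral_univ] at h1
  simp only [univ_inter] at h1
  have hfin : μ (closedBall x s) ≠ ∞ := (isCompact_closedBall x s).measure_lt_top.ne
  rw [ENNReal.le_ofReal_iff_toReal_le hfin (by positivity)]
  linarith

/-- L5: support points are eventually close to `A k`, uniformly on compacts. -/
lemma L5 [IsLocallyFiniteMeasure μ] (hU : IsOpen U)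
    (hconv : ∀ f : En n → ℝ, Continuous f → HasCompactSupport f → tsupport f ⊆ U →
      Tendsto (fun k => ∫ x in A k, f x ∂μH[(n:ℝ)-1]) atTop (𝓝 (∫ x, f x ∂μ)))
    {V : Set (En n)} (hV : IsCompact (closure V)) (hVU : closure V ⊆ U)
    {δ : ℝ} (hδ : 0 < δ) :
    ∀ᶠ k in atTop, ∀ x ∈ msupport μ ∩ V, infDist x (A k) ≤ δ := by
  set S := msupport μ ∩ closure V with hS
  have hScpt : IsCompact S := hV.inter_left (isClosed_msupport μ)
  have hex : ∀ y ∈ S, ∃ ρ, 0 < ρ ∧ ρ ≤ δ/2 ∧ closedBall y ρ ⊆ U := by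
    intro y hy
    obtain ⟨ε, hε, hball⟩ := Metric.isOpen_iff.1 hU y (hVU hy.2)
    refine ⟨min (ε/2) (δ/2), by positivity, min_le_right _ _, ?_⟩
    intro z hz
    apply hball
    have := mem_closedBall.1 hz
    have h1 : min (ε/2) (δ/2) ≤ ε/2 := min_le_left _ _
    exact mem_ball.2 (by linarith)
  choose! ρ hρpos hρδ hρU using hex
  obtain ⟨b', hb'sub, hb'fin, hb'cov⟩ := hScpt.elim_finite_subcover_image
    (fun y (hy : y ∈ S) => isOpen_ball (x := y) (ε := ρ y))
    (fun y hy => mem_biUnion hy (mem_ball_self (hρpos y hy)))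
  have hev : ∀ᶠ k in atTop, ∀ y ∈ b', (A k ∩ ball y (ρ y)).Nonempty := by
    rw [eventually_all_finite hb'fin]
    intro y hy
    have hyS := hb'sub hy
    exact L1 hconv hyS.1 (hρpos y hyS) (hρU y hyS)
  filter_upwards [hev] with k hk
  rintro x ⟨hxsupp, hxV⟩
  have hxS : x ∈ S := ⟨hxsupp, subset_closure hxV⟩
  obtain ⟨y, hy, hxy⟩ := mem_iUnion₂.1 (hb'cov hxS)
  obtain ⟨z, hzA, hzy⟩ := hk y hy
  have hyS := hb'sub hy
  calc infDist x (A k) ≤ dist x z := infDist_le_dist_of_mem hzA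
    _ ≤ dist x y + dist y z := dist_triangle _ _ _
    _ ≤ ρ y + ρ y := by
        have h1 := mem_ball.1 hxy
        have h2 := mem_ball.1 hzy
        rw [dist_comm y z]
        linarith
    _ ≤ δ := by linarith [hρδ y hyS]

/-- L4: points of `A k` in a compact are eventually close to the support. -/
lemma L4 [IsLocallyFiniteMeasure μ] (hc : 0 < c) (hU : IsOpen U) (hAcl : ∀ k, IsClosed (A k))
    (hconv : ∀ f : En n → ℝ, Continuous f → HasCompactSupport f → tsupport f ⊆ U →
      Tendsto (fun k => ∫ x in A k, f x ∂μH[(n:ℝ)-1]) atTop (𝓝 (∫ x, f x ∂μ)))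
    (hdens : ∀ k, ∀ x ∈ A k, ∀ r : ℝ, 0 < r → closedBall x r ⊆ U →
      ENNReal.ofReal (c * r ^ (n-1)) ≤ μH[(n:ℝ)-1] (A k ∩ ball x r) ∧
      μH[(n:ℝ)-1] (A k ∩ ball x r) ≤ ENNReal.ofReal (C * r ^ (n-1)))
    {V : Set (En n)} (hV : IsCompact (closure V)) (hVU : closure V ⊆ U)
    {δ : ℝ} (hδ : 0 < δ) :
    ∀ᶠ k in atTop, ∀ y ∈ A k ∩ V, infDist y (msupport μ) ≤ δ := by
  set K' := {y ∈ closure V | δ ≤ infDist y (msupport μ)} with hK'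
  have hK'closed : IsClosed K' := by
    apply IsClosed.inter isClosed_closure
    exact isClosed_le continuous_const (continuous_infDist_pt _)
  have hK'cpt : IsCompact K' := hV.of_isClosed_subset hK'closed (sep_subset _ _)
  have hnull : ∀ y ∈ K', μ (ball y δ) = 0 := by
    intro y hy
    have hsub : ball y δ ⊆ (msupport μ)ᶜ := by
      intro z hz hzsupp
      have h1 : infDist y (msupport μ) ≤ dist y z := infDist_le_dist_of_mem hzsupp
      have h2 := mem_ball.1 hz
      rw [dist_comm z y] at h2
      linarith [hy.2]
    exact le_antisymm (le_trans (measure_mono hsub)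
      (le_of_eq (measure_compl_msupport μ))) zero_le
  have hex : ∀ y ∈ K', ∃ ρ, 0 < ρ ∧ ρ ≤ δ/4 ∧ closedBall y ρ ⊆ U := by
    intro y hy
    obtain ⟨ε, hε, hball⟩ := Metric.isOpen_iff.1 hU y (hVU hy.1)
    refine ⟨min (ε/2) (δ/4), by positivity, min_le_right _ _, ?_⟩
    intro z hz
    apply hball
    have := mem_closedBall.1 hz
    have h1 : min (ε/2) (δ/4) ≤ ε/2 := min_le_left _ _
    exact mem_ball.2 (by linarith)
  choose! ρ hρpos hρδ hρU using hex
  have hbump : ∀ y ∈ K', ∃ f : En n → ℝ, Continuous f ∧ HasCompactSupport f ∧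
      tsupport f ⊆ closedBall y (3 * ρ y / 4) ∧ (∀ z, 0 ≤ f z) ∧ (∀ z, f z ≤ 1) ∧
      (∀ z ∈ closedBall y (ρ y / 2), f z = 1) ∧
      (∀ z, f z ≤ (closedBall y (3 * ρ y / 4)).indicator (fun _ => (1:ℝ)) z) ∧
      (∀ z, (closedBall y (ρ y / 2)).indicator (fun _ => (1:ℝ)) z ≤ f z) := by
    intro y hy
    have := hρpos y hy
    exact bump_exists y (ρ y / 2) (3 * ρ y / 4) (by linarith) (by linarith)
  choose! F hFc hFcs hFts hFnn hFle1 hFone hFub hFlb using hbump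
  obtain ⟨b', hb'sub, hb'fin, hb'cov⟩ := hK'cpt.elim_finite_subcover_image
    (fun y (hy : y ∈ K') => isOpen_ball (x := y) (ε := ρ y / 4))
    (fun y hy => mem_biUnion hy (mem_ball_self (by linarith [hρpos y hy])))
  have hev : ∀ᶠ k in atTop,
      ∀ y ∈ b', (∫ z in A k, F y z ∂μH[(n:ℝ)-1]) < c * (ρ y / 4) ^ (n-1) := by
    rw [eventually_all_finite hb'fin]
    intro y hy
    have hyK := hb'sub hy
    have hμf : (∫ z, F y z ∂μ) ≤ 0 := by
      have h34U : closedBall y (3 * ρ y / 4) ⊆ U :=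
        (closedBall_subset_closedBall (by linarith [hρpos y hyK])).trans (hρU y hyK)
      have hint := integral_bump_bounds μ univ y (ρ y / 2) (3 * ρ y / 4)
        (by simp only [univ_inter];
            exact (isCompact_closedBall y (3 * ρ y / 4)).measure_lt_top.ne)
        (F y) (hFc y hyK) (hFub y hyK) (hFlb y hyK) (hFnn y hyK)
      have h2 := hint.2.2
      rw [setIntegral_univ] at h2
      simp only [univ_inter] at h2
      refine le_trans h2 ?_
      have : μ (closedBall y (3 * ρ y / 4)) ≤ μ (ball y δ) := by
        apply measure_mono
        apply closedBall_subset_ball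
        linarith [hρδ y hyK, hρpos y hyK]
      rw [hnull y hyK] at this
      simp [le_antisymm this zero_le]
    have hpos : (0:ℝ) < c * (ρ y / 4) ^ (n-1) := by
      have := hρpos y hyK; positivity
    have := (hconv (F y) (hFc y hyK) (hFcs y hyK)
      ((hFts y hyK).trans ((closedBall_subset_closedBall
        (by linarith [hρpos y hyK])).trans (hρU y hyK))))
    exact this.eventually (eventually_lt_nhds (lt_of_le_of_lt hμf hpos))
  filter_upwards [hev] with k hk
  rintro y' ⟨hy'A, hy'V⟩
  by_contra hcon
  push_neg at hcon
  have hy'K : y' ∈ K' := ⟨subset_closure hy'V, hcon.le⟩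
  obtain ⟨y, hy, hy'y⟩ := mem_iUnion₂.1 (hb'cov hy'K)
  have hyK := hb'sub hy
  -- lower bound on the integral
  have hρy := hρpos y hyK
  have hfin : μH[(n:ℝ)-1] (A k ∩ closedBall y (ρ y / 2)) ≠ ∞ := by
    refine hausdorff_finite_on_compact hU ?_ (hAcl k) (isCompact_closedBall _ _)
      ((closedBall_subset_closedBall (by linarith)).trans (hρU y hyK))
    intro z hz ρ' hρ' hρ'U
    exact ne_top_of_le_ne_top ofReal_ne_top (hdens k z hz ρ' hρ' hρ'U).2
  have hfin34 : μH[(n:ℝ)-1] (A k ∩ closedBall y (3 * ρ y / 4)) ≠ ∞ := by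
    refine hausdorff_finite_on_compact hU ?_ (hAcl k) (isCompact_closedBall _ _)
      ((closedBall_subset_closedBall (by linarith)).trans (hρU y hyK))
    intro z hz ρ' hρ' hρ'U
    exact ne_top_of_le_ne_top ofReal_ne_top (hdens k z hz ρ' hρ' hρ'U).2
  have hint := integral_bump_bounds (μH[(n:ℝ)-1]) (A k) y (ρ y / 2) (3 * ρ y / 4)
    hfin34 (F y) (hFc y hyK) (hFub y hyK) (hFlb y hyK) (hFnn y hyK)
  have hsubz : A k ∩ ball y' (ρ y / 4) ⊆ A k ∩ closedBall y (ρ y / 2) := by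
    rintro w ⟨hw1, hw2⟩
    refine ⟨hw1, mem_closedBall.2 ?_⟩
    have h1 := mem_ball.1 hw2
    have h2 := mem_ball.1 hy'y
    calc dist w y ≤ dist w y' + dist y' y := dist_triangle _ _ _
      _ ≤ ρ y / 2 := by linarith
  have hy'U : closedBall y' (ρ y / 4) ⊆ U := by
    refine subset_trans ?_ (hρU y hyK)
    intro w hw
    have h1 := mem_closedBall.1 hw
    have h2 := mem_ball.1 hy'y
    exact mem_closedBall.2 (by calc dist w y ≤ dist w y' + dist y' y := dist_triangle _ _ _
      _ ≤ ρ y := by linarith)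
  have hlow := (hdens k y' hy'A (ρ y / 4) (by linarith) hy'U).1
  have hle : ENNReal.ofReal (c * (ρ y / 4) ^ (n-1)) ≤
      μH[(n:ℝ)-1] (A k ∩ closedBall y (ρ y / 2)) :=
    le_trans hlow (measure_mono hsubz)
  have : c * (ρ y / 4) ^ (n-1) ≤ ∫ z in A k, F y z ∂μH[(n:ℝ)-1] := by
    refine le_trans ?_ hint.2.1
    calc c * (ρ y / 4) ^ (n-1) = (ENNReal.ofReal (c * (ρ y / 4) ^ (n-1))).toReal := by
          rw [ENNReal.toReal_ofReal (by positivity)]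
      _ ≤ (μH[(n:ℝ)-1] (A k ∩ closedBall y (ρ y / 2))).toReal := ENNReal.toReal_mono hfin hle
  exact absurd (hk y hy) (not_lt.2 this)

lemma ofReal_pow_eq_rpow (hn : 1 ≤ n) {a : ℝ} (ha : 0 ≤ a) :
    ENNReal.ofReal (a ^ (n-1)) = (ENNReal.ofReal a) ^ ((n:ℝ)-1) := by
  have hd0 : (0:ℝ) ≤ (n:ℝ) - 1 := by
    have : (1:ℝ) ≤ (n:ℝ) := by exact_mod_cast hn
    linarith
  rw [show ((n:ℝ) - 1) = ((n-1 : ℕ) : ℝ) by rw [Nat.cast_sub hn, Nat.cast_one]]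
  rw [ENNReal.ofReal_rpow_of_nonneg ha (by positivity : (0:ℝ) ≤ ((n-1:ℕ):ℝ))]
  rw [Real.rpow_natCast]

/-- L9: lower Hausdorff density bound for the support. -/
lemma L9 [IsLocallyFiniteMeasure μ] (hn : 1 ≤ n) (hc : 0 < c) (hcC : c ≤ C) (hU : IsOpen U)
    (hAcl : ∀ k, IsClosed (A k))
    (hconv : ∀ f : En n → ℝ, Continuous f → HasCompactSupport f → tsupport f ⊆ U →
      Tendsto (fun k => ∫ x in A k, f x ∂μH[(n:ℝ)-1]) atTop (𝓝 (∫ x, f x ∂μ)))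
    (hdens : ∀ k, ∀ x ∈ A k, ∀ r : ℝ, 0 < r → closedBall x r ⊆ U →
      ENNReal.ofReal (c * r ^ (n-1)) ≤ μH[(n:ℝ)-1] (A k ∩ ball x r) ∧
      μH[(n:ℝ)-1] (A k ∩ ball x r) ≤ ENNReal.ofReal (C * r ^ (n-1)))
    {x : En n} (hx : x ∈ msupport μ) {r : ℝ} (hr : 0 < r) (hrU : closedBall x r ⊆ U) :
    ENNReal.ofReal ((c / C / 32 ^ (n-1)) * r ^ (n-1)) ≤
      μH[(n:ℝ)-1] (msupport μ ∩ ball x r) := by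
  have hC : 0 < C := lt_of_lt_of_le hc hcC
  have hd0 : (0:ℝ) ≤ (n:ℝ) - 1 := by
    have : (1:ℝ) ≤ (n:ℝ) := by exact_mod_cast hn
    linarith
  set d : ℝ := (n:ℝ) - 1 with hd
  set T := msupport μ ∩ ball x r with hT
  -- the K constant
  set K : ℝ≥0∞ := ENNReal.ofReal (C * 2 ^ (n-1)) with hK
  have hK0 : K ≠ 0 := by
    rw [hK, Ne, ENNReal.ofReal_eq_zero, not_le]
    positivity
  have hKtop : K ≠ ∞ := ofReal_ne_top
  -- lower bound on μ of the half ball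
  have hL2 : ENNReal.ofReal (c * (r/16) ^ (n-1)) ≤ μ (ball x (r/2)) := by
    have h2U : closedBall x (r/2) ⊆ U :=
      (closedBall_subset_closedBall (by linarith)).trans hrU
    have := L2 hc hU hAcl hconv hdens hx (by linarith : (0:ℝ) < r/2) h2U
    convert this using 3
    ring
  rw [Measure.hausdorffMeasure_apply]
  refine le_trans ?_ (le_iSup₂ (f := fun (r' : ℝ≥0∞) (_ : 0 < r') =>
    ⨅ (t : ℕ → Set (En n)) (_ : T ⊆ ⋃ m, t m) (_ : ∀ m, EMetric.diam (t m) ≤ r'),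
      ∑' m, ⨆ _ : (t m).Nonempty, EMetric.diam (t m) ^ d)
    (ENNReal.ofReal (r/16)) (by rw [ENNReal.ofReal_pos]; linarith))
  refine le_iInf fun t => le_iInf fun hcov => le_iInf fun hdiam => ?_
  -- per-piece estimate
  have key : ∀ j : ℕ, μ (t j ∩ (ball x (r/2) ∩ msupport μ)) ≤
      K * ⨆ _ : (t j).Nonempty, EMetric.diam (t j) ^ d := by
    intro j
    by_cases hne : (t j ∩ (ball x (r/2) ∩ msupport μ)).Nonempty
    · obtain ⟨y, hyt, hyb, hysupp⟩ := hne
      rw [iSup_pos ⟨y, hyt⟩]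
      have hdj := hdiam j
      have hdjtop : EMetric.diam (t j) ≠ ∞ := ne_top_of_le_ne_top ofReal_ne_top hdj
      set D : ℝ := Metric.diam (t j) with hD
      have hD0 : 0 ≤ D := Metric.diam_nonneg
      have hDr : D ≤ r/16 := by
        rw [hD, Metric.diam]
        calc (EMetric.diam (t j)).toReal ≤ (ENNReal.ofReal (r/16)).toReal :=
              ENNReal.toReal_mono ofReal_ne_top hdj
          _ = r/16 := ENNReal.toReal_ofReal (by linarith)
      have hediam : EMetric.diam (t j) = ENNReal.ofReal D := by
        rw [hD, Metric.diam]; exact (ENNReal.ofReal_toReal hdjtop).symm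
      have htsub : t j ⊆ closedBall y D := by
        intro z hz
        exact mem_closedBall.2 (Metric.dist_le_diam_of_mem
          (Metric.isBounded_iff_ediam_ne_top.2 hdjtop) hz hyt)
      by_cases hDpos : 0 < D
      · -- positive diameter
        have hball : t j ∩ (ball x (r/2) ∩ msupport μ) ⊆ ball y (2*D) := by
          intro z hz
          have := mem_closedBall.1 (htsub hz.1)
          exact mem_ball.2 (by linarith)
        have h2DU : closedBall y (2*D) ⊆ U := by
          refine subset_trans ?_ hrU
          intro z hz
          have h1 := mem_closedBall.1 hz
          have h2 := mem_ball.1 hyb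
          exact mem_closedBall.2 (by
            calc dist z x ≤ dist z y + dist y x := dist_triangle _ _ _
              _ ≤ r := by linarith)
        have hL7 := L7 hc hcC hU hconv hdens hysupp
          (by linarith : (0:ℝ) < 2*D) h2DU
        calc μ (t j ∩ (ball x (r/2) ∩ msupport μ)) ≤ μ (ball y (2*D)) :=
              measure_mono hball
          _ ≤ ENNReal.ofReal (C * (2*D) ^ (n-1)) := hL7
          _ = K * EMetric.diam (t j) ^ d := by
              rw [hediam, hK, ← ofReal_pow_eq_rpow hn hD0, ← ENNReal.ofReal_mul (by positivity)]
              congr 1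
              rw [mul_pow]
              ring
      · -- zero diameter
        have hDzero : D = 0 := le_antisymm (not_lt.1 hDpos) hD0
        have hsing : t j ⊆ {y} := by
          intro z hz
          have := EMetric.diam_eq_zero_iff.1 (by show EMetric.diam (t j) = 0; rw [hediam, hDzero]; simp)
          exact this hz hyt
        by_cases hn1 : n = 1
        · -- n = 1 : exponent 0
          subst hn1
          have h4U : closedBall y (r/4) ⊆ U := by
            refine subset_trans ?_ hrU
            intro z hz
            have h1 := mem_closedBall.1 hz
            have h2 := mem_ball.1 hyb
            exact mem_closedBall.2 (by
              calc dist z x ≤ dist z y + dist y x := dist_triangle _ _ _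
                _ ≤ r := by linarith)
          have hL7 := L7 hc hcC hU hconv hdens hysupp
            (by linarith : (0:ℝ) < r/4) h4U
          have hball : t j ∩ (ball x (r/2) ∩ msupport μ) ⊆ ball y (r/4) := by
            intro z hz
            have hz1 := hsing hz.1
            rw [mem_singleton_iff] at hz1
            subst hz1
            exact mem_ball_self (by linarith)
          calc μ (t j ∩ (ball x (r/2) ∩ msupport μ)) ≤ μ (ball y (r/4)) :=
                measure_mono hball
            _ ≤ ENNReal.ofReal (C * (r/4) ^ (1-1)) := hL7
            _ = K * EMetric.diam (t j) ^ d := by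
                have hdzero : d = 0 := by rw [hd]; norm_num
                rw [hdzero, ENNReal.rpow_zero, mul_one, hK]
                norm_num
        · -- n ≥ 2
          have hn2 : 2 ≤ n := by omega
          have hzero : μ {y} = 0 := by
            have hev : ∀ m : ℕ, μ {y} ≤ ENNReal.ofReal (C * ((r/4)/(m+1)) ^ (n-1)) := by
              intro m
              have hm1 : (0:ℝ) < (m:ℝ) + 1 := by positivity
              have hρ : (0:ℝ) < (r/4)/((m:ℝ)+1) := by positivity
              have hρr : (r/4)/((m:ℝ)+1) ≤ r/4 := by
                rw [div_le_iff₀ hm1]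
                nlinarith
              have hρU : closedBall y ((r/4)/((m:ℝ)+1)) ⊆ U := by
                refine subset_trans ?_ hrU
                intro z hz
                have h1 := mem_closedBall.1 hz
                have h2 := mem_ball.1 hyb
                exact mem_closedBall.2 (by
                  calc dist z x ≤ dist z y + dist y x := dist_triangle _ _ _
                    _ ≤ r := by linarith)
              refine le_trans (measure_mono ?_) (L7 hc hcC hU hconv hdens hysupp hρ hρU)
              intro z hz
              rw [mem_singleton_iff] at hz
              subst hz
              exact mem_ball_self hρ
            have hlim : Tendsto (fun m : ℕ => ENNReal.ofReal (C * ((r/4)/(m+1)) ^ (n-1)))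
                atTop (𝓝 0) := by
              rw [show (0:ℝ≥0∞) = ENNReal.ofReal 0 by simp]
              apply ENNReal.tendsto_ofReal
              have h0 : Tendsto (fun m : ℕ => (r/4) * (1/((m:ℝ)+1))) atTop (𝓝 ((r/4) * 0)) :=
                tendsto_one_div_add_atTop_nhds_zero_nat.const_mul (r/4)
              have h1 : Tendsto (fun m : ℕ => (r/4)/((m:ℝ)+1)) atTop (𝓝 0) := by
                rw [mul_zero] at h0
                exact h0.congr (fun m => by rw [mul_one_div])
              have h2 : Tendsto (fun m : ℕ => ((r/4)/((m:ℝ)+1)) ^ (n-1)) atTop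
                  (𝓝 (0 ^ (n-1))) := h1.pow (n-1)
              rw [zero_pow (by omega : n - 1 ≠ 0)] at h2
              simpa using h2.const_mul C
            exact le_antisymm (ge_of_tendsto hlim (Eventually.of_forall hev)) zero_le
          have : μ (t j ∩ (ball x (r/2) ∩ msupport μ)) = 0 := by
            refine le_antisymm (le_trans (measure_mono ?_) hzero.le) zero_le
            exact fun z hz => hsing hz.1
          rw [this]
          exact zero_le
    · rw [not_nonempty_iff_eq_empty.1 hne]
      simp
  -- assemble
  have hchain : ENNReal.ofReal (c * (r/16) ^ (n-1)) ≤
      K * ∑' j, ⨆ _ : (t j).Nonempty, EMetric.diam (t j) ^ d := by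
    refine le_trans hL2 ?_
    have hsub : ball x (r/2) ⊆ (ball x (r/2) ∩ msupport μ) ∪ (msupport μ)ᶜ := by
      intro z hz
      by_cases hzs : z ∈ msupport μ
      · exact Or.inl ⟨hz, hzs⟩
      · exact Or.inr hzs
    calc μ (ball x (r/2)) ≤ μ ((ball x (r/2) ∩ msupport μ) ∪ (msupport μ)ᶜ) :=
          measure_mono hsub
      _ ≤ μ (ball x (r/2) ∩ msupport μ) + μ (msupport μ)ᶜ := measure_union_le _ _
      _ = μ (ball x (r/2) ∩ msupport μ) := by rw [measure_compl_msupport μ, add_zero]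
      _ ≤ μ (⋃ j, t j ∩ (ball x (r/2) ∩ msupport μ)) := by
          apply measure_mono
          intro z hz
          have hzT : z ∈ T := ⟨hz.2, mem_ball.2 (by linarith [mem_ball.1 hz.1])⟩
          obtain ⟨j, hj⟩ := mem_iUnion.1 (hcov hzT)
          exact mem_iUnion.2 ⟨j, hj, hz⟩
      _ ≤ ∑' j, μ (t j ∩ (ball x (r/2) ∩ msupport μ)) := measure_iUnion_le _
      _ ≤ ∑' j, K * ⨆ _ : (t j).Nonempty, EMetric.diam (t j) ^ d :=
          ENNReal.tsum_le_tsum key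
      _ = K * ∑' j, ⨆ _ : (t j).Nonempty, EMetric.diam (t j) ^ d := ENNReal.tsum_mul_left
  have hdiv : ENNReal.ofReal (c * (r/16) ^ (n-1)) / K ≤
      ∑' j, ⨆ _ : (t j).Nonempty, EMetric.diam (t j) ^ d := by
    rw [ENNReal.div_le_iff_le_mul (Or.inl hK0) (Or.inl hKtop)]
    exact le_trans hchain (le_of_eq (mul_comm _ _))
  refine le_trans ?_ hdiv
  rw [hK, ← ENNReal.ofReal_div_of_pos (by positivity)]
  apply ENNReal.ofReal_le_ofReal
  apply le_of_eq
  have h32 : (32:ℝ) ^ (n-1) = 16 ^ (n-1) * 2 ^ (n-1) := by rw [← mul_pow]; norm_num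
  rw [div_pow, h32]
  have h16 : ((16:ℝ)) ^ (n-1) ≠ 0 := by positivity
  have h2 : ((2:ℝ)) ^ (n-1) ≠ 0 := by positivity
  field_simp

lemma ediam_closedBall_le (y : En n) {ρ : ℝ} (hρ : 0 ≤ ρ) :
    EMetric.diam (closedBall y ρ) ≤ ENNReal.ofReal (2 * ρ) := by
  apply EMetric.diam_le
  intro z hz w hw
  rw [edist_dist]
  apply ENNReal.ofReal_le_ofReal
  calc dist z w ≤ dist z y + dist y w := dist_triangle _ _ _
    _ ≤ ρ + ρ := by
        have h1 := mem_closedBall.1 hz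
        have h2 := mem_closedBall.1 hw
        rw [dist_comm y w]
        linarith
    _ = 2 * ρ := by ring

lemma vitali_cover (hU : IsOpen U) {S : Set (En n)} (hS : IsCompact S) (hSU : S ⊆ U)
    {ρmax : ℝ} (hρmax : 0 < ρmax) :
    ∃ (F : Finset (En n)) (ρ : En n → ℝ),
      (∀ y ∈ F, y ∈ S) ∧ (∀ y ∈ F, 0 < ρ y ∧ ρ y ≤ ρmax ∧ closedBall y (ρ y) ⊆ U) ∧
      ((F : Set (En n)).PairwiseDisjoint fun y => closedBall y (ρ y)) ∧
      (S ⊆ ⋃ y ∈ F, closedBall y (4 * ρ y)) := by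
  have hex : ∀ y ∈ S, ∃ ρ, 0 < ρ ∧ ρ ≤ ρmax ∧ closedBall y ρ ⊆ U := by
    intro y hy
    obtain ⟨ε, hε, hball⟩ := Metric.isOpen_iff.1 hU y (hSU hy)
    refine ⟨min (ε/2) ρmax, by positivity, min_le_right _ _, ?_⟩
    intro z hz
    apply hball
    have := mem_closedBall.1 hz
    have h1 : min (ε/2) ρmax ≤ ε/2 := min_le_left _ _
    exact mem_ball.2 (by linarith)
  choose! ρ hρpos hρle hρU using hex
  obtain ⟨b', hb'sub, hb'fin, hb'cov⟩ := hS.elim_finite_subcover_image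
    (fun y (hy : y ∈ S) => isOpen_ball (x := y) (ε := ρ y))
    (fun y hy => mem_biUnion hy (mem_ball_self (hρpos y hy)))
  obtain ⟨u, hub', hudisj, hucov⟩ :=
    Vitali.exists_disjoint_subfamily_covering_enlargement_closedBall b' id ρ ρmax
      (fun a ha => hρle a (hb'sub ha)) 4 (by norm_num)
  have hufin : u.Finite := hb'fin.subset hub'
  refine ⟨hufin.toFinset, ρ, ?_, ?_, ?_, ?_⟩
  · intro y hy
    rw [Set.Finite.mem_toFinset] at hy
    exact hb'sub (hub' hy)
  · intro y hy
    rw [Set.Finite.mem_toFinset] at hy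
    have hyS := hb'sub (hub' hy)
    exact ⟨hρpos y hyS, hρle y hyS, hρU y hyS⟩
  · intro a ha b hb hab
    rw [Set.Finite.coe_toFinset] at ha hb
    exact hudisj ha hb hab
  · intro z hz
    obtain ⟨y, hy, hzy⟩ := mem_iUnion₂.1 (hb'cov hz)
    obtain ⟨b, hbu, hsub⟩ := hucov y hy
    have : z ∈ closedBall b (4 * ρ b) := by
      apply hsub
      exact mem_closedBall.2 (le_of_lt (mem_ball.1 hzy))
    exact mem_iUnion₂.2 ⟨b, Set.Finite.mem_toFinset hufin |>.2 hbu, this⟩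

/-- L8: upper Hausdorff density bound for the support. -/
lemma L8 [IsLocallyFiniteMeasure μ] (hn : 1 ≤ n) (hc : 0 < c) (hcC : c ≤ C) (hU : IsOpen U)
    (hAcl : ∀ k, IsClosed (A k))
    (hconv : ∀ f : En n → ℝ, Continuous f → HasCompactSupport f → tsupport f ⊆ U →
      Tendsto (fun k => ∫ x in A k, f x ∂μH[(n:ℝ)-1]) atTop (𝓝 (∫ x, f x ∂μ)))
    (hdens : ∀ k, ∀ x ∈ A k, ∀ r : ℝ, 0 < r → closedBall x r ⊆ U →
      ENNReal.ofReal (c * r ^ (n-1)) ≤ μH[(n:ℝ)-1] (A k ∩ ball x r) ∧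
      μH[(n:ℝ)-1] (A k ∩ ball x r) ≤ ENNReal.ofReal (C * r ^ (n-1)))
    {x : En n} (hx : x ∈ msupport μ) {r : ℝ} (hr : 0 < r) (hrU : closedBall x r ⊆ U) :
    μH[(n:ℝ)-1] (msupport μ ∩ ball x r) ≤
      ENNReal.ofReal ((64 ^ (n-1) * (C / c)) * r ^ (n-1)) := by
  have hC : 0 < C := lt_of_lt_of_le hc hcC
  have hd0 : (0:ℝ) ≤ (n:ℝ) - 1 := by
    have : (1:ℝ) ≤ (n:ℝ) := by exact_mod_cast hn
    linarith
  rw [measure_inter_ball_eq_iSup (μH[(n:ℝ)-1]) (msupport μ) (isClosed_msupport μ).measurableSet x hr]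
  refine iSup_le fun j => ?_
  set s : ℝ := r - r / (j+1) with hsdef
  have hsr : s < r := by
    have : 0 < r / ((j:ℝ)+1) := by positivity
    rw [hsdef]; linarith
  clear_value s
  set δ : ℝ := (r - s)/2 with hδdef
  clear_value δ
  have hδpos : 0 < δ := by rw [hδdef]; linarith
  set S := msupport μ ∩ closedBall x s with hSdef
  have hScpt : IsCompact S := (isCompact_closedBall x s).inter_left (isClosed_msupport μ)
  have hSU : S ⊆ U := by
    intro z hz
    apply hrU
    exact mem_closedBall.2 (le_trans (mem_closedBall.1 hz.2) (by linarith))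
  -- covers at scale δ/(m+1)
  have hcovers : ∀ m : ℕ, ∃ (F : Finset (En n)) (ρ : En n → ℝ),
      (∀ y ∈ F, y ∈ S) ∧
      (∀ y ∈ F, 0 < ρ y ∧ ρ y ≤ δ/(m+1) ∧ closedBall y (ρ y) ⊆ U) ∧
      ((F : Set (En n)).PairwiseDisjoint fun y => closedBall y (ρ y)) ∧
      (S ⊆ ⋃ y ∈ F, closedBall y (4 * ρ y)) := by
    intro m
    have : (0:ℝ) < δ/(m+1) := by positivity
    exact vitali_cover hU hScpt hSU this
  choose F ρ hFS hFρ hFdisj hFcov using hcovers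
  -- the sum bound for each m
  have hsum : ∀ m : ℕ, (∑ i : {y // y ∈ F m}, EMetric.diam (closedBall i.1 (4 * ρ m i.1)) ^ ((n:ℝ)-1))
      ≤ ENNReal.ofReal ((64 ^ (n-1) * (C / c)) * r ^ (n-1)) := by
    intro m
    have hterm : ∀ i : {y // y ∈ F m},
        EMetric.diam (closedBall i.1 (4 * ρ m i.1)) ^ ((n:ℝ)-1) ≤
        ENNReal.ofReal (64 ^ (n-1) / c) * ENNReal.ofReal (c * (ρ m i.1 / 8) ^ (n-1)) := by
      rintro ⟨y, hy⟩
      obtain ⟨hρ1, hρ2, hρ3⟩ := hFρ m y hy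
      have h1 : EMetric.diam (closedBall y (4 * ρ m y)) ≤ ENNReal.ofReal (8 * ρ m y) := by
        refine le_trans (ediam_closedBall_le y (by linarith)) ?_
        apply ENNReal.ofReal_le_ofReal
        linarith
      calc EMetric.diam (closedBall y (4 * ρ m y)) ^ ((n:ℝ)-1)
          ≤ (ENNReal.ofReal (8 * ρ m y)) ^ ((n:ℝ)-1) := ENNReal.rpow_le_rpow h1 hd0
        _ = ENNReal.ofReal ((8 * ρ m y) ^ (n-1)) := (ofReal_pow_eq_rpow hn (by linarith)).symm
        _ = ENNReal.ofReal ((64 ^ (n-1) / c) * (c * (ρ m y / 8) ^ (n-1))) := by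
            congr 1
            rw [show (8:ℝ) * ρ m y = 64 * (ρ m y / 8) by ring, mul_pow]
            field_simp
        _ = ENNReal.ofReal (64 ^ (n-1) / c) * ENNReal.ofReal (c * (ρ m y / 8) ^ (n-1)) := by
            rw [← ENNReal.ofReal_mul (by positivity)]
    have hmeas : ∀ i : {y // y ∈ F m}, ENNReal.ofReal (c * (ρ m i.1 / 8) ^ (n-1)) ≤
        μ (ball i.1 (ρ m i.1)) := by
      rintro ⟨y, hy⟩
      obtain ⟨hρ1, hρ2, hρ3⟩ := hFρ m y hy
      have := L2 hc hU hAcl hconv hdens (hFS m y hy).1 hρ1 hρ3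
      exact this
    have hdisj : (↑(F m) : Set (En n)).PairwiseDisjoint (fun y => ball y (ρ m y)) :=
      (hFdisj m).mono_on (fun y _ => ball_subset_closedBall)
    have hsum2 : (∑ y ∈ F m, μ (ball y (ρ m y))) ≤ μ (ball x r) := by
      rw [← measure_biUnion_finset hdisj (fun y _ => measurableSet_ball)]
      apply measure_mono
      intro z hz
      obtain ⟨y, hy, hzy⟩ := Set.mem_iUnion₂.1 hz
      have hyS := hFS m y hy
      obtain ⟨hρ1, hρ2, hρ3⟩ := hFρ m y hy
      have h1 := mem_ball.1 hzy
      have h2 := mem_closedBall.1 hyS.2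
      have hm1 : (1:ℝ) ≤ (m:ℝ) + 1 := by
        have : (0:ℝ) ≤ (m:ℝ) := Nat.cast_nonneg m
        linarith
      have hρδ : ρ m y ≤ δ := le_trans hρ2 (by
        rw [div_le_iff₀ (by linarith)]
        nlinarith [hδpos])
      refine mem_ball.2 ?_
      calc dist z x ≤ dist z y + dist y x := dist_triangle _ _ _
        _ < δ + s := by linarith
        _ < r := by rw [hδdef]; linarith
    calc (∑ i : {y // y ∈ F m}, EMetric.diam (closedBall i.1 (4 * ρ m i.1)) ^ ((n:ℝ)-1))
        ≤ ∑ i : {y // y ∈ F m}, ENNReal.ofReal (64 ^ (n-1) / c) *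
            ENNReal.ofReal (c * (ρ m i.1 / 8) ^ (n-1)) := Finset.sum_le_sum (fun i _ => hterm i)
      _ = ENNReal.ofReal (64 ^ (n-1) / c) *
            ∑ i : {y // y ∈ F m}, ENNReal.ofReal (c * (ρ m i.1 / 8) ^ (n-1)) := by
          rw [Finset.mul_sum]
      _ ≤ ENNReal.ofReal (64 ^ (n-1) / c) * ∑ i : {y // y ∈ F m}, μ (ball i.1 (ρ m i.1)) := by
          apply mul_le_mul_right
          exact Finset.sum_le_sum (fun i _ => hmeas i)
      _ = ENNReal.ofReal (64 ^ (n-1) / c) * ∑ y ∈ F m, μ (ball y (ρ m y)) := by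
          rw [Finset.sum_coe_sort (F m) (fun y => μ (ball y (ρ m y)))]
      _ ≤ ENNReal.ofReal (64 ^ (n-1) / c) * μ (ball x r) := mul_le_mul_right hsum2 _
      _ ≤ ENNReal.ofReal (64 ^ (n-1) / c) * ENNReal.ofReal (C * r ^ (n-1)) :=
          mul_le_mul_right (L7 hc hcC hU hconv hdens hx hr hrU) _
      _ = ENNReal.ofReal ((64 ^ (n-1) * (C / c)) * r ^ (n-1)) := by
          rw [← ENNReal.ofReal_mul (by positivity)]
          congr 1
          field_simp
  -- apply the liminf lemma
  have hmain := Measure.hausdorffMeasure_le_liminf_sum (ι := fun m : ℕ => {y // y ∈ F m}) ((n:ℝ)-1) S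
    (fun m : ℕ => ENNReal.ofReal (8 * (δ/(m+1))))
    (by
      rw [show (0:ℝ≥0∞) = ENNReal.ofReal 0 by simp]
      apply ENNReal.tendsto_ofReal
      have h0 : Tendsto (fun m : ℕ => (8*δ) * (1/((m:ℝ)+1))) atTop (𝓝 ((8*δ) * 0)) :=
        tendsto_one_div_add_atTop_nhds_zero_nat.const_mul (8*δ)
      rw [mul_zero] at h0
      exact h0.congr (fun m => by rw [mul_one_div]; ring))
    (fun m i => closedBall i.1 (4 * ρ m i.1))
    (by
      apply Eventually.of_forall
      rintro m ⟨y, hy⟩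
      obtain ⟨hρ1, hρ2, hρ3⟩ := hFρ m y hy
      refine le_trans (ediam_closedBall_le y (by linarith)) ?_
      apply ENNReal.ofReal_le_ofReal
      linarith)
    (by
      apply Eventually.of_forall
      intro m
      intro z hz
      obtain ⟨y, hy, hzy⟩ := Set.mem_iUnion₂.1 (hFcov m hz)
      exact Set.mem_iUnion.2 ⟨⟨y, hy⟩, hzy⟩)
  refine le_trans hmain ?_
  refine le_trans (liminf_le_liminf (Eventually.of_forall hsum)) ?_
  rw [liminf_const]

end Core


/-- If closed sets `A_k ⊆ U` satisfy uniform two-sided `H^{n-1}` density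
estimates and `H^{n-1} ⌊ A_k ⇀* μ`, then `A_k → supp μ` locally in `U` in the Hausdorff
topology, and `supp μ` satisfies the same density estimates (with adjusted constants). -/
theorem stmt_5 (n : ℕ) (c C : ℝ) (hc : 0 < c) (hcC : c ≤ C)
    (U : Set (En n)) (hU : IsOpen U)
    (A : ℕ → Set (En n)) (hAcl : ∀ k, IsClosed (A k)) (hAsub : ∀ k, A k ⊆ U)
    (μ : Measure (En n)) [IsLocallyFiniteMeasure μ]
    (hconv : ∀ f : En n → ℝ, Continuous f → HasCompactSupport f → tsupport f ⊆ U →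
      Tendsto (fun k => ∫ x in A k, f x ∂μH[(n:ℝ)-1]) atTop (𝓝 (∫ x, f x ∂μ)))
    (hdens : ∀ k, ∀ x ∈ A k, ∀ r : ℝ, 0 < r → closedBall x r ⊆ U →
      ENNReal.ofReal (c * r ^ (n-1)) ≤ μH[(n:ℝ)-1] (A k ∩ ball x r) ∧
      μH[(n:ℝ)-1] (A k ∩ ball x r) ≤ ENNReal.ofReal (C * r ^ (n-1))) :
    (∀ V : Set (En n), IsCompact (closure V) → closure V ⊆ U →
      Tendsto (fun k => hdist (A k) (msupport μ) V) atTop (𝓝 0)) ∧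
    ∃ c' C' : ℝ, 0 < c' ∧ c' ≤ C' ∧
      ∀ x ∈ msupport μ, ∀ r : ℝ, 0 < r → closedBall x r ⊆ U →
        ENNReal.ofReal (c' * r ^ (n-1)) ≤ μH[(n:ℝ)-1] (msupport μ ∩ ball x r) ∧
        μH[(n:ℝ)-1] (msupport μ ∩ ball x r) ≤ ENNReal.ofReal (C' * r ^ (n-1)) := by
  constructor
  · -- Part 1: local Hausdorff convergence
    intro V hV hVU
    rw [Metric.tendsto_atTop]
    intro ε hε
    have h5 := L5 hU hconv hV hVU (δ := ε/4) (by linarith)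
    have h4 := L4 hc hU hAcl hconv hdens hV hVU (δ := ε/4) (by linarith)
    obtain ⟨N, hN⟩ := eventually_atTop.1 (h5.and h4)
    refine ⟨N, fun k hk => ?_⟩
    obtain ⟨hk5, hk4⟩ := hN k hk
    have h1 : (⨆ x ∈ msupport μ ∩ V, infDist x (A k)) ≤ ε/4 :=
      Real.iSup_le (fun x => Real.iSup_le (fun hx => hk5 x hx) (by linarith)) (by linarith)
    have h2 : (⨆ x ∈ A k ∩ V, infDist x (msupport μ)) ≤ ε/4 :=
      Real.iSup_le (fun x => Real.iSup_le (fun hx => hk4 x hx) (by linarith)) (by linarith)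
    have h1' : 0 ≤ ⨆ x ∈ msupport μ ∩ V, infDist x (A k) :=
      Real.iSup_nonneg fun x => Real.iSup_nonneg fun _ => infDist_nonneg
    have h2' : 0 ≤ ⨆ x ∈ A k ∩ V, infDist x (msupport μ) :=
      Real.iSup_nonneg fun x => Real.iSup_nonneg fun _ => infDist_nonneg
    rw [Real.dist_eq, sub_zero, abs_of_nonneg (by simp only [hdist]; linarith)]
    simp only [hdist]
    linarith
  · -- Part 2: density estimates for the support
    rcases Nat.eq_zero_or_pos n with hn0 | hn1
    · -- degenerate case n = 0
      subst hn0
      refine ⟨1, 1, one_pos, le_refl _, ?_⟩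
      intro x hx r hr hrU
      exfalso
      have hsub : ∀ a b : En 0, a = b := fun a b => PiLp.ext (fun i => i.elim0)
      have hxU : x ∈ U := hrU (mem_closedBall_self hr.le)
      have hUuniv : ∀ z : En 0, z ∈ U := fun z => hsub z x ▸ hxU
      -- all A k are empty
      have hAempty : ∀ k, A k = ∅ := by
        intro k
        rw [Set.eq_empty_iff_forall_notMem]
        intro y hy
        have hdk := (hdens k y hy 1 one_pos (fun z _ => hUuniv z)).2
        have hne : (A k ∩ ball y 1).Nonempty := ⟨y, hy, mem_ball_self one_pos⟩
        have htop : μH[((0:ℕ):ℝ)-1] (A k ∩ ball y 1) = ∞ := by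
          rcases Measure.hausdorffMeasure_zero_or_top
            (by norm_num : ((0:ℕ):ℝ)-1 < (0:ℝ)) (A k ∩ ball y 1) with h0 | h0
          · exact absurd h0 (by
              have := Measure.one_le_hausdorffMeasure_zero_of_nonempty (X := En 0) hne
              intro hz
              rw [hz] at this
              exact absurd this (by simp))
          · exact h0
        rw [htop] at hdk
        exact absurd (top_le_iff.1 hdk) ofReal_ne_top
      -- μ vanishes
      have hcompactsupp : HasCompactSupport (fun _ : En 0 => (1:ℝ)) := by
        have : (tsupport (fun _ : En 0 => (1:ℝ))).Subsingleton := fun a _ b _ => hsub a b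
        exact this.finite.isCompact
      have hint := hconv (fun _ => 1) continuous_const hcompactsupp (fun z _ => hUuniv z)
      have hzero : ∀ k, (∫ z in A k, (1:ℝ) ∂μH[((0:ℕ):ℝ)-1]) = 0 := by
        intro k
        rw [hAempty k]
        simp [Measure.restrict_empty]
      have heq : (∫ z, (1:ℝ) ∂μ) = 0 := by
        exact tendsto_nhds_unique (hint.congr hzero)
          (tendsto_const_nhds : Tendsto (fun _ : ℕ => (0:ℝ)) atTop (𝓝 0))
      have hμuniv : μ univ = 0 := by
        have h1 : (∫ z, (1:ℝ) ∂μ) = (μ univ).toReal := by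
          rw [integral_const]
          simp [measureReal_def]
        have hfin : μ univ ≠ ∞ := by
          have hss : (univ : Set (En 0)).Subsingleton := fun a _ b _ => hsub a b
          exact hss.finite.isCompact.measure_lt_top.ne
        have h2 : (μ univ).toReal = 0 := by rw [← h1, heq]
        rcases (ENNReal.toReal_eq_zero_iff _).1 h2 with h | h
        · exact h
        · exact absurd h hfin
      have hlt := lt_of_lt_of_le (hx r hr) (measure_mono (subset_univ _))
      rw [hμuniv] at hlt
      exact lt_irrefl _ hlt
    · -- n ≥ 1
      have hn : 1 ≤ n := hn1
      have hC : 0 < C := lt_of_lt_of_le hc hcC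
      refine ⟨c/C/32^(n-1), 64^(n-1)*(C/c), by positivity, ?_, ?_⟩
      · have h32 : (1:ℝ) ≤ 32 ^ (n-1) := one_le_pow₀ (by norm_num)
        have h64 : (1:ℝ) ≤ 64 ^ (n-1) := one_le_pow₀ (by norm_num)
        have h1 : c/C/32^(n-1) ≤ c/C := div_le_self (by positivity) h32
        have h2 : c/C ≤ 1 := div_le_one_of_le₀ hcC hC.le
        have h3 : (1:ℝ) ≤ C/c := (one_le_div hc).2 hcC
        have h4 : C/c ≤ 64^(n-1) * (C/c) := le_mul_of_one_le_left (by positivity) h64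
        linarith
      · intro x hx r hr hrU
        exact ⟨L9 hn hc hcC hU hAcl hconv hdens hx hr hrU,
          L8 hn hc hcC hU hAcl hconv hdens hx hr hrU⟩
end
end
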